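/- arXiv:2102.09726 — 7 statements merged into one kernel-verified Lean document; each statement's English description precedes it below -/
import Mathlib

section
/- Let F be a field and ℓ ≥ 2 an integer. Let a_0, …, a_ℓ ∈ F and p(z) = Σ_{k=0}^ℓ a_k z^k ∈ F[z]. Define the Horner partial evaluations h_ℓ = a_ℓ and h_k = a_k + z·h_{k+1} ∈ F[z] for k = ℓ−1 down to 1. Define ℓ×ℓ matrices over F[z] (indices from 1 to ℓ): L(z) with L_{1,1} = z·a_ℓ + a_{ℓ−1}, L_{1,j} = a_{ℓ−j} for 2 ≤ j ≤ ℓ, L_{i,i−1} = −1 and L_{i,i} = z for 2 ≤ i ≤ ℓ, and all other entries 0; E(z) with E_{1,1} = 1, E_{1,j} = h_{ℓ+1−j} for 2 ≤ j ≤ ℓ, and for 2 ≤ i ≤ ℓ, E_{i,j} = −z^{i+j−ℓ−2} if i + j ≥ ℓ + 2 and E_{i,j} = 0 otherwise; F(z) with F_{i,1} = z^{ℓ−i} for 1 ≤ i ≤ ℓ, F_{i,ℓ+1−i} = 1 for 1 ≤ i ≤ ℓ−1, and all other entries 0. Then E(z)·L(z)·F(z) = diag(p(z), 1, …, 1), and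 det E(z) ∈ {1, −1} and det F(z) ∈ {1, −1}. -/
/-!
Right multiplication by `L` sends entry `(i, j)` of a matrix `M` to
`M i 0 * L 0 j + x * M i j - M i (j + 1)` (the middle term only for `j ≠ 0`, the last one only
for `j ≠ ℓ - 1`). On the first row of `E`, which lists the Horner evaluations, the recursion
`h k = a k + x * h (k + 1)` kills every column except the last one, where `a 0 + x * h 1 = p`
remains; row `i ≥ 1` of `E` becomes `e (ℓ - 1 - i) - x ^ i • e (ℓ - 1)`. Row `ℓ - 1` of `F` is
`e 0` and row `ℓ - 1 - i` is `x ^ i • e 0 + e i` for `i ≥ 1`, so multiplying by `F` gives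
`diag(p, 1, …, 1)`. Permuting the rows of `E` by `i ↦ -i mod ℓ`, and the columns of `F` by
`j ↦ ℓ - 1 - j`, makes both upper triangular with diagonal entries `±1`.
-/

theorem sum_mul_pow_eq_sum_add_pow_mul_of_horner {R : Type*} [CommSemiring R] (x : R)
    (a h : ℕ → R) {ℓ : ℕ} (hhℓ : h ℓ = a ℓ)
    (hh : ∀ k, 1 ≤ k → k < ℓ → h k = a k + x * h (k + 1)) {k : ℕ} (hk : 1 ≤ k) (hkℓ : k ≤ ℓ) :
    ∑ i ∈ Finset.range (ℓ + 1), a i * x ^ i =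
      ∑ i ∈ Finset.range k, a i * x ^ i + x ^ k * h k := by
  induction hkℓ using Nat.decreasingInduction with
  | self => rw [Finset.sum_range_succ, hhℓ, mul_comm]
  | of_succ k hkℓ ih =>
    rw [ih (by omega), hh k hk hkℓ, Finset.sum_range_succ]
    ring

theorem mul_eq_one_or_neg_one {M : Type*} [Monoid M] [HasDistribNeg M] {x y : M}
    (hx : x = 1 ∨ x = -1) (hy : y = 1 ∨ y = -1) : x * y = 1 ∨ x * y = -1 := by
  rcases hx with rfl | rfl <;> rcases hy with rfl | rfl <;> simp

namespace Matrix

variable {n R : Type*} [Fintype n] [DecidableEq n] [LinearOrder n] [CommRing R]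

theorem det_eq_one_or_neg_one_of_isUpperTriangular_submatrix {M : Matrix n n R}
    (σ τ : Equiv.Perm n) (hM : (M.submatrix σ τ).IsUpperTriangular)
    (hdiag : ∀ i, M (σ i) (τ i) = 1 ∨ M (σ i) (τ i) = -1) : M.det = 1 ∨ M.det = -1 := by
  set u : ℤˣ := Equiv.Perm.sign τ * Equiv.Perm.sign σ
  have hu : ((u : ℤ) : R) = 1 ∨ ((u : ℤ) : R) = -1 := by
    rcases Int.units_eq_one_or u with hu | hu <;> simp [hu]
  have hsub : (M.submatrix σ τ).det = (u : ℤ) * M.det := by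
    rw [show M.submatrix σ τ = (M.submatrix σ id).submatrix id τ from rfl, det_permute',
      det_permute]
    push_cast [u]
    ring
  have hdet : M.det = (u : ℤ) * (M.submatrix σ τ).det := by
    rw [hsub, ← mul_assoc, ← Int.cast_mul, ← Units.val_mul, Int.units_mul_self]
    simp
  rw [hdet, det_of_isUpperTriangular hM]
  exact mul_eq_one_or_neg_one hu <| Finset.prod_induction _ (fun y => y = 1 ∨ y = -1)
    (fun _ _ => mul_eq_one_or_neg_one) (Or.inl rfl) fun i _ => hdiag i

end Matrix

section SecondCompanion

variable {S : Type*} [CommRing S]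

def secondCompanion (x : S) (a : ℕ → S) (ℓ : ℕ) : Matrix (Fin ℓ) (Fin ℓ) S :=
  Matrix.of fun i j =>
    if i.val = 0 then (if j.val = 0 then x * a ℓ + a (ℓ - 1) else a (ℓ - 1 - j.val))
    else if j.val + 1 = i.val then -1
    else if j = i then x
    else 0

def secondCompanionLeftCofactor (x : S) (h : ℕ → S) (ℓ : ℕ) :
    Matrix (Fin ℓ) (Fin ℓ) S :=
  Matrix.of fun i j =>
    if i.val = 0 then (if j.val = 0 then 1 else h (ℓ - j.val))
    else if ℓ ≤ i.val + j.val then -(x ^ (i.val + j.val - ℓ))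
    else 0

def secondCompanionRightCofactor (x : S) (ℓ : ℕ) : Matrix (Fin ℓ) (Fin ℓ) S :=
  Matrix.of fun i j =>
    if j.val = 0 then x ^ (ℓ - 1 - i.val)
    else if i.val + j.val = ℓ - 1 then 1
    else 0

section Entries

variable {x : S} {ℓ : ℕ} {i j : Fin ℓ}

@[simp]
theorem secondCompanion_zero_zero [NeZero ℓ] (a : ℕ → S) :
    secondCompanion x a ℓ 0 0 = x * a ℓ + a (ℓ - 1) := by
  simp [secondCompanion]

theorem secondCompanion_zero_apply [NeZero ℓ] (a : ℕ → S) (hj : j ≠ 0) :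
    secondCompanion x a ℓ 0 j = a (ℓ - 1 - j) := by
  simp [secondCompanion, hj]

@[simp]
theorem secondCompanionLeftCofactor_zero_zero [NeZero ℓ] (h : ℕ → S) :
    secondCompanionLeftCofactor x h ℓ 0 0 = 1 := by
  simp [secondCompanionLeftCofactor]

theorem secondCompanionLeftCofactor_zero_apply [NeZero ℓ] (h : ℕ → S) (hj : j ≠ 0) :
    secondCompanionLeftCofactor x h ℓ 0 j = h (ℓ - j) := by
  simp [secondCompanionLeftCofactor, hj]

theorem secondCompanionLeftCofactor_apply_of_ne_zero [NeZero ℓ] (h : ℕ → S) (hi : i ≠ 0) :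
    secondCompanionLeftCofactor x h ℓ i j =
      if ℓ ≤ i + j then -x ^ (i + j - ℓ : ℕ) else 0 := by
  simp [secondCompanionLeftCofactor, hi]

end Entries

theorem secondCompanion_apply_eq_ite {x : S} {a : ℕ → S} {n : ℕ} (c j : Fin (n + 1)) :
    secondCompanion x a (n + 1) c j =
      (if c = 0 then secondCompanion x a (n + 1) 0 j else 0)
        + (if j = 0 then 0 else if c = j then x else 0)
        - (if j = Fin.last n then 0 else if c = j + 1 then 1 else 0) := by
  simp only [secondCompanion, Matrix.of_apply, Fin.ext_iff, Fin.val_zero, Fin.val_add_one,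
    Fin.val_last]
  split_ifs <;> first | omega | ring1

theorem mul_secondCompanion_apply (x : S) (a : ℕ → S) {n : ℕ}
    (M : Matrix (Fin (n + 1)) (Fin (n + 1)) S) (i j : Fin (n + 1)) :
    (M * secondCompanion x a (n + 1)) i j =
      M i 0 * secondCompanion x a (n + 1) 0 j + (if j = 0 then 0 else M i j * x)
        - (if j = Fin.last n then 0 else M i (j + 1)) := by
  rw [Matrix.mul_apply, Finset.sum_congr rfl fun c _ => by rw [secondCompanion_apply_eq_ite c j]]
  simp only [mul_sub, mul_add, Finset.sum_sub_distrib, Finset.sum_add_distrib, mul_ite,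
    mul_zero, mul_one]
  split_ifs <;> simp

theorem secondCompanionLeftCofactor_mul_secondCompanion_zero_apply {x : S} {a h : ℕ → S}
    {n : ℕ} (hn : n ≠ 0) (hhℓ : h (n + 1) = a (n + 1))
    (hh : ∀ k, 1 ≤ k → k < n + 1 → h k = a k + x * h (k + 1)) (j : Fin (n + 1)) :
    (secondCompanionLeftCofactor x h (n + 1) * secondCompanion x a (n + 1)) 0 j =
      if j = Fin.last n then a 0 + x * h 1 else 0 := by
  rw [mul_secondCompanion_apply, secondCompanionLeftCofactor_zero_zero, one_mul]
  rcases eq_or_ne j (Fin.last n) with rfl | hjl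
  · have hl : Fin.last n ≠ 0 := Fin.ext_iff.not.2 hn
    rw [secondCompanion_zero_apply _ hl, secondCompanionLeftCofactor_zero_apply _ hl]
    simp [hn, mul_comm]
  have hjn : (j : ℕ) < n := Fin.lt_last_iff_ne_last.2 hjl
  have hj1 : ((j + 1 : Fin (n + 1)) : ℕ) = j + 1 :=
    Fin.val_add_one_of_lt (Fin.lt_last_iff_ne_last.2 hjl)
  have hj1_ne : j + 1 ≠ 0 := by rw [Ne, Fin.ext_iff, hj1, Fin.val_zero]; omega
  rw [if_neg hjl, if_neg hjl, secondCompanionLeftCofactor_zero_apply _ hj1_ne, hj1]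
  rcases eq_or_ne j 0 with rfl | hj0
  · rw [secondCompanion_zero_zero, if_pos rfl, Fin.val_zero, Nat.add_sub_cancel,
      hh n (by omega) (by omega), hhℓ]
    ring
  · rw [secondCompanion_zero_apply _ hj0, if_neg hj0,
      secondCompanionLeftCofactor_zero_apply _ hj0, hh (n + 1 - (j + 1)) (by omega) (by omega),
      show n + 1 - (j + 1) + 1 = n + 1 - j by omega, show n + 1 - 1 - j = n + 1 - (j + 1) by omega]
    ring

theorem secondCompanionLeftCofactor_mul_secondCompanion_apply_of_ne_zero {x : S} {a h : ℕ → S}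
    {n : ℕ} {i : Fin (n + 1)} (hi : i ≠ 0) (j : Fin (n + 1)) :
    (secondCompanionLeftCofactor x h (n + 1) * secondCompanion x a (n + 1)) i j =
      if j = Fin.last n then -x ^ (i : ℕ) else if j = i.rev then 1 else 0 := by
  have hi0 : (i : ℕ) ≠ 0 := Fin.val_ne_zero_iff.2 hi
  have hin : (i : ℕ) ≤ n := Fin.le_last i
  simp only [mul_secondCompanion_apply, secondCompanionLeftCofactor_apply_of_ne_zero _ hi,
    Fin.val_zero, add_zero, if_neg (show ¬n + 1 ≤ (i : ℕ) by omega), zero_mul, zero_add]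
  rcases eq_or_ne j (Fin.last n) with rfl | hjl
  · have hl : Fin.last n ≠ 0 := Fin.ext_iff.not.2 (by simp; omega)
    rw [if_neg hl, if_pos rfl, if_pos rfl, Fin.val_last, if_pos (by omega), sub_zero, neg_mul,
      ← pow_succ, show (i : ℕ) + n - (n + 1) + 1 = i by omega]
  have hj1 : ((j + 1 : Fin (n + 1)) : ℕ) = j + 1 :=
    Fin.val_add_one_of_lt (Fin.lt_last_iff_ne_last.2 hjl)
  rw [if_neg hjl, if_neg hjl, hj1]
  simp only [Fin.ext_iff, Fin.val_rev, Fin.val_zero]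
  rcases lt_trichotomy ((i : ℕ) + j) n with hlt | heq | hgt
  · split_ifs <;> first | omega | simp
  · rw [show (i : ℕ) + (j + 1) - (n + 1) = 0 by omega]
    split_ifs <;> first | omega | simp
  · rw [show (i : ℕ) + (j + 1) - (n + 1) = i + j - (n + 1) + 1 by omega, pow_succ]
    split_ifs <;> first | omega | ring

theorem secondCompanionRightCofactor_rev_apply (x : S) {n : ℕ} (i j : Fin (n + 1)) :
    secondCompanionRightCofactor x (n + 1) i.rev j =
      if j = 0 then x ^ (i : ℕ) else if j = i then 1 else 0 := by
  simp only [secondCompanionRightCofactor, Matrix.of_apply, Fin.val_rev, Fin.ext_iff,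
    Fin.val_zero]
  have := i.isLt
  split_ifs <;> first | omega | rfl | (congr 1; omega)

theorem secondCompanionLeftCofactor_mul_secondCompanion_mul_secondCompanionRightCofactor
    {x : S} {a h : ℕ → S} {n : ℕ} (hn : n ≠ 0) (hhℓ : h (n + 1) = a (n + 1))
    (hh : ∀ k, 1 ≤ k → k < n + 1 → h k = a k + x * h (k + 1)) :
    secondCompanionLeftCofactor x h (n + 1) * secondCompanion x a (n + 1) *
        secondCompanionRightCofactor x (n + 1) =
      Matrix.diagonal fun i : Fin (n + 1) => if (i : ℕ) = 0 then a 0 + x * h 1 else 1 := by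
  ext i j
  rw [Matrix.mul_apply]
  rcases eq_or_ne i 0 with rfl | hi
  · simp_rw [secondCompanionLeftCofactor_mul_secondCompanion_zero_apply hn hhℓ hh, ite_mul,
      zero_mul, Finset.sum_ite_eq', Finset.mem_univ, if_true, ← Fin.rev_zero,
      secondCompanionRightCofactor_rev_apply]
    rcases eq_or_ne j 0 with rfl | hj
    · simp
    · simp [hj, Matrix.diagonal_apply_ne _ hj.symm]
  · have hrev : i.rev ≠ Fin.last n := by rwa [Ne, ← Fin.rev_zero, Fin.rev_inj]
    simp_rw [secondCompanionLeftCofactor_mul_secondCompanion_apply_of_ne_zero hi]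
    rw [Fintype.sum_eq_add i.rev (Fin.last n) hrev (fun c hc => by simp [hc.1, hc.2]),
      if_neg hrev, if_pos rfl, if_pos rfl, ← Fin.rev_zero, secondCompanionRightCofactor_rev_apply,
      secondCompanionRightCofactor_rev_apply]
    rcases eq_or_ne j 0 with rfl | hj
    · simp [Matrix.diagonal_apply_ne _ hi]
    · rcases eq_or_ne i j with rfl | hij
      · simp [hj]
      · simp [hj, hij.symm, Matrix.diagonal_apply_ne _ hij]

theorem det_secondCompanionRightCofactor (x : S) (ℓ : ℕ) :
    (secondCompanionRightCofactor x ℓ).det = 1 ∨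
      (secondCompanionRightCofactor x ℓ).det = -1 := by
  refine Matrix.det_eq_one_or_neg_one_of_isUpperTriangular_submatrix (Equiv.refl _) Fin.revPerm
    (fun i j hji => ?_) fun i => Or.inl ?_
  · have := i.isLt
    rw [id, id, Fin.lt_def] at hji
    simp only [Matrix.submatrix_apply, Equiv.coe_refl, id, Fin.revPerm_apply,
      secondCompanionRightCofactor, Matrix.of_apply, Fin.val_rev]
    split_ifs <;> first | rfl | omega
  · have := i.isLt
    simp only [Equiv.coe_refl, id, Fin.revPerm_apply, secondCompanionRightCofactor,
      Matrix.of_apply, Fin.val_rev]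
    split_ifs <;> first | rfl | omega | simp [show ℓ - 1 - i = 0 by omega]

theorem det_secondCompanionLeftCofactor (x : S) (h : ℕ → S) (ℓ : ℕ) :
    (secondCompanionLeftCofactor x h ℓ).det = 1 ∨
      (secondCompanionLeftCofactor x h ℓ).det = -1 := by
  refine Matrix.det_eq_one_or_neg_one_of_isUpperTriangular_submatrix (Equiv.neg _)
    (Equiv.refl _) (fun i j hji => ?_) fun i => ?_
  · have := i.isLt
    rw [id, id, Fin.lt_def] at hji
    have hneg : ((-i : Fin ℓ) : ℕ) = ℓ - i := by
      rw [Fin.val_neg', Nat.mod_eq_of_lt (by omega)]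
    simp only [Matrix.submatrix_apply, Equiv.coe_refl, id, Equiv.neg_apply,
      secondCompanionLeftCofactor, Matrix.of_apply, hneg]
    split_ifs <;> first | rfl | omega
  · have := i.isLt
    rcases eq_or_ne (i : ℕ) 0 with hi | hi
    · simp [secondCompanionLeftCofactor, Fin.val_neg', hi]
    · have hneg : ((-i : Fin ℓ) : ℕ) = ℓ - i := by
        rw [Fin.val_neg', Nat.mod_eq_of_lt (by omega)]
      simp [secondCompanionLeftCofactor, hneg, show ℓ - i ≠ 0 by omega]

end SecondCompanion

/-- Explicit unimodular cofactors for the second companion form of a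
scalar polynomial `p(z) = Σ_{k=0}^ℓ a_k z^k` (grade `ℓ ≥ 2`) in the monomial basis:
with the Horner partial evaluations `h_ℓ = a_ℓ`, `h_k = a_k + z·h_{k+1}`, and with
`L`, `E`, `F` the ℓ×ℓ matrices described (indices here 0-based, shifted from the
1-based description), one has `E(z)·L(z)·F(z) = diag(p(z),1,…,1)` and
`det E, det F ∈ {1, −1}`. -/
theorem monomial_second_companion_equivalence
    {F : Type*} [Field F] (ℓ : ℕ) (hℓ : 2 ≤ ℓ) (a : ℕ → F)
    (p : Polynomial F)
    (hp : p = ∑ k ∈ Finset.range (ℓ + 1), Polynomial.C (a k) * Polynomial.X ^ k)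
    (h : ℕ → Polynomial F)
    (hhℓ : h ℓ = Polynomial.C (a ℓ))
    (hh : ∀ k, 1 ≤ k → k < ℓ → h k = Polynomial.C (a k) + Polynomial.X * h (k + 1))
    (L E Fm : Matrix (Fin ℓ) (Fin ℓ) (Polynomial F))
    (hL : ∀ i j : Fin ℓ, L i j =
      if i.val = 0 then
        (if j.val = 0 then
          Polynomial.X * Polynomial.C (a ℓ) + Polynomial.C (a (ℓ - 1))
        else Polynomial.C (a (ℓ - 1 - j.val)))
      else if j.val + 1 = i.val then -1
      else if j = i then Polynomial.X
      else 0)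
    (hE : ∀ i j : Fin ℓ, E i j =
      if i.val = 0 then
        (if j.val = 0 then 1 else h (ℓ - j.val))
      else if ℓ ≤ i.val + j.val then -(Polynomial.X ^ (i.val + j.val - ℓ))
      else 0)
    (hF : ∀ i j : Fin ℓ, Fm i j =
      if j.val = 0 then Polynomial.X ^ (ℓ - 1 - i.val)
      else if i.val + j.val = ℓ - 1 then 1
      else 0) :
    E * L * Fm = Matrix.diagonal (fun i : Fin ℓ => if i.val = 0 then p else 1) ∧
    (E.det = 1 ∨ E.det = -1) ∧ (Fm.det = 1 ∨ Fm.det = -1) := by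
  obtain ⟨n, rfl⟩ : ∃ n, ℓ = n + 1 := ⟨ℓ - 1, by omega⟩
  obtain rfl : L = secondCompanion Polynomial.X (fun k => Polynomial.C (a k)) (n + 1) :=
    Matrix.ext hL
  obtain rfl : E = secondCompanionLeftCofactor Polynomial.X h (n + 1) := Matrix.ext hE
  obtain rfl : Fm = secondCompanionRightCofactor Polynomial.X (n + 1) := Matrix.ext hF
  have hp_horner : p = Polynomial.C (a 0) + Polynomial.X * h 1 := by
    rw [hp, sum_mul_pow_eq_sum_add_pow_mul_of_horner Polynomial.X (fun k => Polynomial.C (a k))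
      h hhℓ hh le_rfl (by omega)]
    simp
  refine ⟨?_, det_secondCompanionLeftCofactor _ _ _, det_secondCompanionRightCofactor _ _⟩
  rw [hp_horner, secondCompanionLeftCofactor_mul_secondCompanion_mul_secondCompanionRightCofactor
    (by omega) hhℓ hh]
end

section
/- Let F be a field and ℓ ≥ 2. Let α_k, β_k, γ_k ∈ F for 0 ≤ k ≤ ℓ−1 with every α_k ≠ 0, and define the degree-graded polynomial basis φ_0 = 1, φ_1 = (z − β_0)/α_0, and φ_{k+1} = ((z − β_k)φ_k − γ_k φ_{k−1})/α_k for 1 ≤ k ≤ ℓ−1. Let a_0, …, a_ℓ ∈ F and p(z) = Σ_{k=0}^ℓ a_k φ_k(z). Define the ℓ×ℓ pencil L(z) = z·C_1 − C_0 over F[z], where C_1 = diag(a_ℓ/α_{ℓ−1}, 1, …, 1) and C_0 has first row (−a_{ℓ−1} + (β_{ℓ−1}/α_{ℓ−1})a_ℓ, −a_{ℓ−2} + (γ_{ℓ−1}/α_{ℓ−1})a_ℓ, −a_{ℓ−3}, …, −a_0), and for 2 ≤ i ≤ ℓ the entries α_{ℓ−i}, β_{ℓ−i}, γ_{ℓ−i}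 in columns i−1, i, i+1 respectively (the entry γ_{ℓ−i} being omitted when i = ℓ), with all other entries 0. Then det L(z) = (∏_{k=0}^{ℓ−2} α_k) · p(z); in particular L(z) is a companion pencil for p. -/
/-!
With `v = (φ_{ℓ-1}, …, φ_1, φ_0)`, rows `2, …, ℓ` of `L(z) v` are the three-term recurrence
and therefore vanish, while row `1` is `Σ_{k<ℓ} a_k φ_k` plus `a_ℓ/α_{ℓ-1}` times the recurrence
for `α_{ℓ-1} φ_ℓ`, i.e. `p`. So `L v = p e_1`, and since the last entry of `v` is `φ_0 = 1`,
Cramer's rule gives `det L` as `p` times the cofactor of position `(1, ℓ)`. That minor is upper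
triangular with diagonal `-α_{ℓ-2}, …, -α_0`. (Rows counted from 1; `Fin ℓ` counts from 0.)
-/

open Polynomial Matrix

theorem Matrix.det_mul_last_eq_of_mulVec_eq_single {R : Type*} [CommRing R] {n : ℕ}
    (L : Matrix (Fin (n + 1)) (Fin (n + 1)) R) (v : Fin (n + 1) → R) (p : R)
    (h : L *ᵥ v = Pi.single 0 p) :
    L.det * v (Fin.last n) = (-1) ^ n * p * (L.submatrix Fin.succ Fin.castSucc).det := by
  have hadj : L.det • v = L.adjugate *ᵥ Pi.single 0 p := by
    rw [← h, mulVec_mulVec, adjugate_mul, smul_mulVec, one_mulVec]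
  calc L.det * v (Fin.last n) = L.adjugate (Fin.last n) 0 * p := by
        simpa [mulVec_single] using congrFun hadj (Fin.last n)
    _ = (-1) ^ n * p * (L.submatrix Fin.succ Fin.castSucc).det := by
        rw [adjugate_fin_succ_eq_det_submatrix, Fin.succAbove_zero, Fin.succAbove_last,
          Fin.val_zero, Fin.val_last, zero_add]
        ring

theorem Fin.sum_univ_ite_val_eq {M : Type*} [AddCommMonoid M] {n : ℕ} (c : ℕ)
    (g : Fin n → M) :
    ∑ j : Fin n, (if (j : ℕ) = c then g j else 0) = if h : c < n then g ⟨c, h⟩ else 0 := by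
  split_ifs with h
  · rw [Finset.sum_eq_single ⟨c, h⟩ (fun j _ hj => if_neg fun e => hj (Fin.ext e)) (by simp)]
    simp
  · exact Finset.sum_eq_zero fun j _ => if_neg fun (e : (j : ℕ) = c) => h (e ▸ j.isLt)

section

variable {F : Type*} [Field F]

theorem Polynomial.C_mul_eq_of_eq_C_inv_mul {c : F} (hc : c ≠ 0) {q r : F[X]}
    (h : q = C c⁻¹ * r) : C c * q = r := by
  rw [h, ← mul_assoc, ← C_mul, mul_inv_cancel₀ hc, C_1, one_mul]

def comradeC1 (ℓ : ℕ) (α a : ℕ → F) : Matrix (Fin ℓ) (Fin ℓ) F :=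
  Matrix.diagonal fun i => if i.val = 0 then a ℓ / α (ℓ - 1) else 1

def comradeC0 (ℓ : ℕ) (α β γ a : ℕ → F) : Matrix (Fin ℓ) (Fin ℓ) F :=
  Matrix.of fun i j =>
    if i.val = 0 then
      (if j.val = 0 then -a (ℓ - 1) + (β (ℓ - 1) / α (ℓ - 1)) * a ℓ
       else if j.val = 1 then -a (ℓ - 2) + (γ (ℓ - 1) / α (ℓ - 1)) * a ℓ
       else -a (ℓ - 1 - j.val))
    else if j.val + 1 = i.val then α (ℓ - 1 - i.val)
    else if j = i then β (ℓ - 1 - i.val)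
    else if j.val = i.val + 1 then γ (ℓ - 1 - i.val)
    else 0

noncomputable def comradePencil (ℓ : ℕ) (α β γ a : ℕ → F) : Matrix (Fin ℓ) (Fin ℓ) F[X] :=
  (X : F[X]) • (comradeC1 ℓ α a).map C - (comradeC0 ℓ α β γ a).map C

variable {ℓ : ℕ} {α β γ a : ℕ → F}

theorem comradePencil_apply (i j : Fin ℓ) :
    comradePencil ℓ α β γ a i j =
      X * C (comradeC1 ℓ α a i j) - C (comradeC0 ℓ α β γ a i j) := by
  simp [comradePencil]

theorem comradePencil_apply_of_val_eq_zero {i : Fin ℓ} (hi : i.val = 0) (j : Fin ℓ) :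
    comradePencil ℓ α β γ a i j =
      C (a (ℓ - 1 - j)) + (if j.val = 0 then C (a ℓ / α (ℓ - 1)) * (X - C (β (ℓ - 1))) else 0)
        - (if j.val = 1 then C (a ℓ / α (ℓ - 1) * γ (ℓ - 1)) else 0) := by
  have hij : i = j ↔ j.val = 0 := by rw [Fin.ext_iff, hi, eq_comm]
  rw [comradePencil_apply, comradeC1, comradeC0, Matrix.diagonal_apply, Matrix.of_apply]
  simp only [hi, hij, if_true]
  obtain h | h | h : j.val = 0 ∨ j.val = 1 ∨ 2 ≤ j.val := by omega
  · simp [h, div_eq_mul_inv, C_mul]; ring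
  · simp [h, div_eq_mul_inv, C_mul, show ℓ - 1 - 1 = ℓ - 2 by omega]; ring
  · simp [show j.val ≠ 0 by omega, show j.val ≠ 1 by omega]

theorem comradePencil_apply_of_val_ne_zero {i : Fin ℓ} (hi : i.val ≠ 0) (j : Fin ℓ) :
    comradePencil ℓ α β γ a i j =
      -(if j.val = i.val - 1 then C (α (ℓ - 1 - i)) else 0)
        + (if j.val = i.val then X - C (β (ℓ - 1 - i)) else 0)
        - (if j.val = i.val + 1 then C (γ (ℓ - 1 - i)) else 0) := by
  rw [comradePencil_apply, comradeC1, comradeC0, Matrix.diagonal_apply, Matrix.of_apply]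
  simp only [hi, Fin.ext_iff, if_false]
  by_cases h : j.val = i.val
  · simp [h, show i.val ≠ i.val - 1 by omega]
  · have : i.val ≠ j.val := Ne.symm h
    split_ifs <;> first | omega | simp

theorem comradePencil_mulVec_apply_of_val_ne_zero (φ : ℕ → F[X]) (hφ0 : φ 0 = 1)
    (hφ1 : C (α 0) * φ 1 = X - C (β 0))
    (hφ : ∀ k, 1 ≤ k → k + 1 < ℓ →
      C (α k) * φ (k + 1) = (X - C (β k)) * φ k - C (γ k) * φ (k - 1))
    {i : Fin ℓ} (hi : i.val ≠ 0) :
    (comradePencil ℓ α β γ a *ᵥ fun j => φ (ℓ - 1 - j)) i = 0 := by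
  simp only [mulVec, dotProduct, comradePencil_apply_of_val_ne_zero hi, add_mul, sub_mul,
    neg_mul, ite_mul, zero_mul, Finset.sum_add_distrib, Finset.sum_sub_distrib,
    Finset.sum_neg_distrib, Fin.sum_univ_ite_val_eq, dif_pos (show i.val - 1 < ℓ by omega), dif_pos i.isLt]
  by_cases hlast : i.val + 1 < ℓ
  · rw [dif_pos hlast, show ℓ - 1 - (i.val - 1) = ℓ - 1 - i + 1 by omega,
      show ℓ - 1 - (i.val + 1) = ℓ - 1 - i - 1 by omega, hφ _ (by omega) (by omega)]
    ring
  -- the last row has no `γ` entry: it is `α₀ φ₁ = (X - β₀) φ₀`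
  · rw [dif_neg hlast, show ℓ - 1 - (i.val - 1) = 1 by omega, show ℓ - 1 - i.val = 0 by omega,
      hφ1, hφ0]
    ring

theorem comradePencil_mulVec_apply_of_val_eq_zero (hℓ : 2 ≤ ℓ) (hα : α (ℓ - 1) ≠ 0)
    (φ : ℕ → F[X])
    (hφ : C (α (ℓ - 1)) * φ ℓ = (X - C (β (ℓ - 1))) * φ (ℓ - 1) - C (γ (ℓ - 1)) * φ (ℓ - 2))
    {i : Fin ℓ} (hi : i.val = 0) :
    (comradePencil ℓ α β γ a *ᵥ fun j => φ (ℓ - 1 - j)) i =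
      ∑ k ∈ Finset.range (ℓ + 1), C (a k) * φ k := by
  have hreflect : ∑ j : Fin ℓ, C (a (ℓ - 1 - j)) * φ (ℓ - 1 - j) =
      ∑ k ∈ Finset.range ℓ, C (a k) * φ k := by
    rw [Fin.sum_univ_eq_sum_range (fun j => C (a (ℓ - 1 - j)) * φ (ℓ - 1 - j)),
      Finset.sum_range_reflect (fun k => C (a k) * φ k)]
  have htop : C (a ℓ) = C (a ℓ / α (ℓ - 1)) * C (α (ℓ - 1)) := by
    rw [← C_mul, div_mul_cancel₀ _ hα]
  simp only [mulVec, dotProduct, comradePencil_apply_of_val_eq_zero hi, add_mul, sub_mul,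
    ite_mul, zero_mul, Finset.sum_add_distrib, Finset.sum_sub_distrib, Fin.sum_univ_ite_val_eq,
    dif_pos (show 0 < ℓ by omega), dif_pos (show 1 < ℓ by omega), hreflect]
  rw [Finset.sum_range_succ, htop, mul_assoc _ (C (α (ℓ - 1))), hφ, Nat.sub_zero,
    show ℓ - 1 - 1 = ℓ - 2 by omega, C_mul]
  ring

theorem comradePencil_submatrix_succ_castSucc_det {n : ℕ} :
    ((comradePencil (n + 1) α β γ a).submatrix Fin.succ Fin.castSucc).det =
      (-1) ^ n * C (∏ k ∈ Finset.range n, α k) := by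
  have hentry (i j : Fin n) := comradePencil_apply_of_val_ne_zero (α := α) (β := β) (γ := γ)
    (a := a) (i := i.succ) (by simp) j.castSucc
  have htri :
      ((comradePencil (n + 1) α β γ a).submatrix Fin.succ Fin.castSucc).IsUpperTriangular := by
    intro i j hij
    have : j.val < i.val := hij
    simp only [submatrix_apply, hentry, Fin.val_succ, Fin.val_castSucc]
    simp [show j.val ≠ i.val by omega, show j.val ≠ i.val + 1 by omega,
      show j.val ≠ i.val + 1 + 1 by omega]
  have hdiag (i : Fin n) :
      comradePencil (n + 1) α β γ a i.succ i.castSucc = -C (α (n - 1 - i)) := by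
    rw [hentry]
    simp [show i.val ≠ i.val + 1 + 1 by omega, show n - (i.val + 1) = n - 1 - i by omega]
  rw [det_of_isUpperTriangular htri]
  simp only [submatrix_apply, hdiag, Finset.prod_neg, Finset.card_univ, Fintype.card_fin]
  rw [Fin.prod_univ_eq_prod_range (fun i => C (α (n - 1 - i))),
    Finset.prod_range_reflect (fun k => C (α k)), map_prod]

end

/-- For a degree-graded basis `φ_k` defined by a three-term recurrence
`z·φ_k = α_k φ_{k+1} + β_k φ_k + γ_k φ_{k−1}` (all `α_k ≠ 0`) and
`p(z) = Σ_{k=0}^ℓ a_k φ_k(z)` with `ℓ ≥ 2`, the ℓ×ℓ pencil `L(z) = z·C_1 − C_0`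
described below (comrade/colleague form, indices here 0-based, shifted from the
1-based description) satisfies `det L(z) = (∏_{k=0}^{ℓ−2} α_k)·p(z)`; in
particular it is a companion pencil for `p`. -/
theorem three_term_recurrence_companion_det
    {F : Type*} [Field F] (ℓ : ℕ) (hℓ : 2 ≤ ℓ)
    (α β γ : ℕ → F) (hα : ∀ k < ℓ, α k ≠ 0)
    (φ : ℕ → Polynomial F)
    (hφ0 : φ 0 = 1)
    (hφ1 : φ 1 = Polynomial.C (α 0)⁻¹ * (Polynomial.X - Polynomial.C (β 0)))
    (hφ : ∀ k, 1 ≤ k → k ≤ ℓ - 1 →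
      φ (k + 1) = Polynomial.C (α k)⁻¹ *
        ((Polynomial.X - Polynomial.C (β k)) * φ k - Polynomial.C (γ k) * φ (k - 1)))
    (a : ℕ → F)
    (p : Polynomial F)
    (hp : p = ∑ k ∈ Finset.range (ℓ + 1), Polynomial.C (a k) * φ k)
    (C1 C0 : Matrix (Fin ℓ) (Fin ℓ) F)
    (hC1 : C1 = Matrix.diagonal (fun i : Fin ℓ =>
      if i.val = 0 then a ℓ / α (ℓ - 1) else 1))
    (hC0 : ∀ i j : Fin ℓ, C0 i j =
      if i.val = 0 then
        (if j.val = 0 then -a (ℓ - 1) + (β (ℓ - 1) / α (ℓ - 1)) * a ℓ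
         else if j.val = 1 then -a (ℓ - 2) + (γ (ℓ - 1) / α (ℓ - 1)) * a ℓ
         else -a (ℓ - 1 - j.val))
      else if j.val + 1 = i.val then α (ℓ - 1 - i.val)
      else if j = i then β (ℓ - 1 - i.val)
      else if j.val = i.val + 1 then γ (ℓ - 1 - i.val)
      else 0) :
    Matrix.det
      ((Polynomial.X : Polynomial F) • C1.map Polynomial.C - C0.map Polynomial.C) =
    Polynomial.C (∏ k ∈ Finset.range (ℓ - 1), α k) * p := by
  obtain ⟨m, rfl⟩ : ∃ m, ℓ = m + 2 := ⟨ℓ - 2, by omega⟩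
  have hL : (X : F[X]) • C1.map C - C0.map C = comradePencil (m + 2) α β γ a := by
    rw [hC1, show C0 = comradeC0 (m + 2) α β γ a from Matrix.ext hC0]
    rfl
  have hrec (k : ℕ) (hk1 : 1 ≤ k) (hk : k < m + 2) :
      C (α k) * φ (k + 1) = (X - C (β k)) * φ k - C (γ k) * φ (k - 1) :=
    C_mul_eq_of_eq_C_inv_mul (hα k hk) (hφ k hk1 (by omega))
  have hmul : comradePencil (m + 2) α β γ a *ᵥ (fun j => φ (m + 2 - 1 - j)) = Pi.single 0 p := by
    funext i
    rcases eq_or_ne i 0 with rfl | hi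
    · rw [Pi.single_eq_same, hp]
      exact comradePencil_mulVec_apply_of_val_eq_zero hℓ (hα _ (by omega)) φ
        (by simpa using hrec (m + 1) (by omega) (by omega)) (Fin.val_zero _)
    · rw [Pi.single_eq_of_ne hi]
      exact comradePencil_mulVec_apply_of_val_ne_zero φ hφ0
        (C_mul_eq_of_eq_C_inv_mul (hα 0 (by omega)) hφ1)
        (fun k hk1 hk => hrec k hk1 (by omega)) (Fin.val_ne_zero_iff.mpr hi)
  have hdet := Matrix.det_mul_last_eq_of_mulVec_eq_single _ _ _ hmul
  rw [comradePencil_submatrix_succ_castSucc_det] at hdet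
  rw [Fin.val_last, show m + 2 - 1 - (m + 1) = 0 by omega, hφ0, mul_one] at hdet
  rw [hL, hdet, show m + 2 - 1 = m + 1 by omega, mul_mul_mul_comm, ← pow_add,
    Even.neg_one_pow ⟨m + 1, rfl⟩, one_mul, mul_comm]
end

section
/- Let a_0, …, a_5 ∈ ℂ and p(z) = Σ_{k=0}^5 a_k T_k(z), where T_k denotes the degree-k Chebyshev polynomial of the first kind. Define the 5×5 matrices over ℂ[z]: L(z) = [[2a_5 z + a_4, a_3 − a_5, a_2, a_1, a_0], [−1/2, z, −1/2, 0, 0], [0, −1/2, z, −1/2, 0], [0, 0, −1/2, z, −1/2], [0, 0, 0, −1, z]]; Ê(z) = [[1, a_1, a_2, a_3 − a_5, 2 z a_5 + a_4], [0, 0, −1/2, z, −1/2], [0, −1/2, z, −1/2, 0], [0, z, −1/2, 0, 0], [0, −1, 0, 0, 0]]; F̂(z) = [[0, 0, 0, 0, 1], [0, 0, 0, 1, −T_1(z)], [0, 0, 1, 0, −T_2(z)], [0, 1, 0, 0, −T_3(z)], [1, 0, 0, 0, −T_4(z)]]. Then Ê(z) · diag(p(z), 1, 1, 1, 1) · F̂(z)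 = L(z), and det Ê(z) and det F̂(z) are nonzero constants (so Ê and F̂ are unimodular); in particular the Chebyshev colleague pencil L(z) is a linearization of p. -/
/-!
Right multiplication by `F̂` moves columns `4, 3, 2, 1` of a matrix `M` to positions
`0, …, 3` and puts `M · (1, -T₁, -T₂, -T₃, -T₄)ᵀ` in the last column. For
`M = Ê · diag(p, 1, 1, 1, 1)`, the first row of that column is
`p - a₁T₁ - a₂T₂ - (a₃ - a₅)T₃ - (2a₅z + a₄)T₄ = a₀`, which is the recurrence
`T₅ = 2zT₄ - T₃`; the next three rows are the recurrence `-½Tₙ + zTₙ₊₁ - ½Tₙ₊₂ = 0` for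
`n = 2, 1, 0`. With its columns in reverse order `F̂` is unitriangular, and deleting the first
row and column of `Ê` leaves an anti-triangular matrix, so `det F̂ = 1` and `det Ê = 1/8`.
-/

open Polynomial

noncomputable section

section CommRing

variable {R : Type*} [CommRing R]

theorem sum_range_six_C_mul_chebyshev_T (a : ℕ → R) :
    ∑ k ∈ Finset.range 6, C (a k) * Chebyshev.T R (k : ℤ) =
      C (a 0) + C (a 1) * Chebyshev.T R 1 + C (a 2) * Chebyshev.T R 2
        + (C (a 3) - C (a 5)) * Chebyshev.T R 3
        + (C (2 * a 5) * X + C (a 4)) * Chebyshev.T R 4 := by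
  have hT5 : Chebyshev.T R 5 = 2 * X * Chebyshev.T R 4 - Chebyshev.T R 3 :=
    Chebyshev.T_add_two R 3
  simp only [Finset.sum_range_succ, Finset.sum_range_zero, Nat.cast_ofNat, Nat.cast_one,
    Nat.cast_zero, Chebyshev.T_zero, hT5, C_mul, C_ofNat]
  ring

variable (R) in
def colleagueRightFactor : Matrix (Fin 5) (Fin 5) R[X] :=
  !![0, 0, 0, 0, 1;
     0, 0, 0, 1, -Chebyshev.T R 1;
     0, 0, 1, 0, -Chebyshev.T R 2;
     0, 1, 0, 0, -Chebyshev.T R 3;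
     1, 0, 0, 0, -Chebyshev.T R 4]

theorem det_colleagueRightFactor : (colleagueRightFactor R).det = 1 := by
  simp [colleagueRightFactor, Matrix.det_succ_row_zero, Fin.sum_univ_succ, Fin.succAbove]
  norm_num

end CommRing

section Field

variable {K : Type*} [Field K]

theorem colleague_row_mul_chebyshev_T_eq_zero [NeZero (2 : K)] (n : ℤ) :
    C (-(1:K)/2) * Chebyshev.T K n + X * Chebyshev.T K (n + 1)
      + C (-(1:K)/2) * Chebyshev.T K (n + 2) = 0 := by
  have two_mul_C_neg_half : (2 : K[X]) * C (-(1:K)/2) = -1 := by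
    rw [← C_ofNat, ← C_mul, mul_div_cancel₀ _ two_ne_zero, C_neg, C_1]
  linear_combination C (-(1:K)/2) * Chebyshev.T_add_two K n
    + X * Chebyshev.T K (n + 1) * two_mul_C_neg_half

def colleaguePencil (a : ℕ → K) : Matrix (Fin 5) (Fin 5) K[X] :=
  !![C (2 * a 5) * X + C (a 4), C (a 3) - C (a 5), C (a 2), C (a 1), C (a 0);
     C (-(1:K)/2), X, C (-(1:K)/2), 0, 0;
     0, C (-(1:K)/2), X, C (-(1:K)/2), 0;
     0, 0, C (-(1:K)/2), X, C (-(1:K)/2);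
     0, 0, 0, -1, X]

def colleagueLeftFactor (a : ℕ → K) : Matrix (Fin 5) (Fin 5) K[X] :=
  !![1, C (a 1), C (a 2), C (a 3) - C (a 5), C (2 * a 5) * X + C (a 4);
     0, 0, C (-(1:K)/2), X, C (-(1:K)/2);
     0, C (-(1:K)/2), X, C (-(1:K)/2), 0;
     0, X, C (-(1:K)/2), 0, 0;
     0, -1, 0, 0, 0]

theorem det_colleagueLeftFactor (a : ℕ → K) : (colleagueLeftFactor a).det = C (1 / 8) := by
  simp [colleagueLeftFactor, Matrix.det_succ_row_zero, Fin.sum_univ_succ, Fin.succAbove]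
  norm_num
  rw [← C_mul, ← C_mul, ← C_neg]
  congr 1
  -- `ring` alone cannot identify `2⁻¹ ^ 3` with `8⁻¹` without knowing the characteristic
  rw [show (8 : K) = 2 * (2 * 2) by norm_num, mul_inv, mul_inv]
  ring

theorem colleagueLeftFactor_mul_diagonal_mul_colleagueRightFactor [NeZero (2 : K)]
    (a : ℕ → K) :
    colleagueLeftFactor a
        * Matrix.diagonal ![∑ k ∈ Finset.range 6, C (a k) * Chebyshev.T K (k : ℤ), 1, 1, 1, 1]
        * colleagueRightFactor K = colleaguePencil a := by
  have row₀ := colleague_row_mul_chebyshev_T_eq_zero (K := K) 0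
  have row₁ := colleague_row_mul_chebyshev_T_eq_zero (K := K) 1
  have row₂ := colleague_row_mul_chebyshev_T_eq_zero (K := K) 2
  simp only [Int.reduceAdd, zero_add, Chebyshev.T_zero, Chebyshev.T_one, mul_one]
    at row₀ row₁ row₂
  refine Matrix.ext fun i j => ?_
  simp only [Matrix.mul_apply, Fin.sum_univ_five]
  fin_cases i <;> fin_cases j <;> simp [colleagueLeftFactor, colleagueRightFactor, colleaguePencil]
  · rw [sum_range_six_C_mul_chebyshev_T, C_mul, Chebyshev.T_one]
    ring
  · linear_combination -row₂
  · linear_combination -row₁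
  · linear_combination -row₀

end Field

end

/-- For `p(z) = Σ_{k=0}^5 a_k T_k(z)` (Chebyshev basis, over ℂ), the
explicit 5×5 matrices `Ê(z)`, `F̂(z)` satisfy
`Ê(z)·diag(p,1,1,1,1)·F̂(z) = L(z)` where `L(z)` is the Chebyshev colleague pencil,
and `det Ê`, `det F̂` are nonzero constants; in particular `L` is a linearization
of `p`. -/
theorem chebyshev_colleague_equivalence (a : ℕ → ℂ)
    (p : Polynomial ℂ)
    (hp : p = ∑ k ∈ Finset.range 6, C (a k) * Polynomial.Chebyshev.T ℂ (k : ℤ))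
    (L Ehat Fhat : Matrix (Fin 5) (Fin 5) (Polynomial ℂ))
    (hL : L = !![C (2 * a 5) * X + C (a 4), C (a 3) - C (a 5), C (a 2), C (a 1), C (a 0);
                 C (-(1:ℂ)/2), X, C (-(1:ℂ)/2), 0, 0;
                 0, C (-(1:ℂ)/2), X, C (-(1:ℂ)/2), 0;
                 0, 0, C (-(1:ℂ)/2), X, C (-(1:ℂ)/2);
                 0, 0, 0, -1, X])
    (hE : Ehat = !![1, C (a 1), C (a 2), C (a 3) - C (a 5), C (2 * a 5) * X + C (a 4);
                    0, 0, C (-(1:ℂ)/2), X, C (-(1:ℂ)/2);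
                    0, C (-(1:ℂ)/2), X, C (-(1:ℂ)/2), 0;
                    0, X, C (-(1:ℂ)/2), 0, 0;
                    0, -1, 0, 0, 0])
    (hF : Fhat = !![0, 0, 0, 0, 1;
                    0, 0, 0, 1, -Polynomial.Chebyshev.T ℂ 1;
                    0, 0, 1, 0, -Polynomial.Chebyshev.T ℂ 2;
                    0, 1, 0, 0, -Polynomial.Chebyshev.T ℂ 3;
                    1, 0, 0, 0, -Polynomial.Chebyshev.T ℂ 4]) :
    Ehat * Matrix.diagonal ![p, 1, 1, 1, 1] * Fhat = L ∧
    (∃ c : ℂ, c ≠ 0 ∧ Ehat.det = C c) ∧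
    (∃ c : ℂ, c ≠ 0 ∧ Fhat.det = C c) := by
  subst hp hL hE hF
  exact ⟨colleagueLeftFactor_mul_diagonal_mul_colleagueRightFactor a,
    ⟨1 / 8, by norm_num, det_colleagueLeftFactor a⟩,
    ⟨1, one_ne_zero, det_colleagueRightFactor.trans C_1.symm⟩⟩
end

section
/- Let y_0, …, y_5 ∈ ℂ, let B_k^5(z) = C(5,k) z^k (1−z)^{5−k} be the degree-5 Bernstein polynomials, and let a_0, …, a_5 ∈ ℂ be the monomial coefficients determined by Σ_{k=0}^5 y_k B_k^5(z) = Σ_{k=0}^5 a_k z^k. Let L_B(z) be the 5×5 Bernstein companion pencil with first row ((1/5)y_5 z + y_4(1−z), y_3(1−z), y_2(1−z), y_1(1−z), y_0(1−z)), subdiagonal entries z−1 in positions (i,i−1) for 2 ≤ i ≤ 5, diagonal entries (2/4)z, (3/3)z, (4/2)z, (5/1)z in positions (2,2), …, (5,5), and zeros elsewhere; and let L_m(z) be the 5×5 monomial pencil with first row (z a_5 + a_4, a_3, a_2, a_1, a_0), entries −1 in positions (i,i−1) and z in positions (i,i) for 2 ≤ i ≤ 5, and zeros elsewhere. Set h_3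 = −10y_3 + 20y_2 − 15y_1 + 4y_0, h_2 = −10y_2 + 15y_1 − 6y_0, h_1 = −5y_1 + 4y_0, and define the constant matrices M = [[1, h_3, h_2, h_1, −y_0], [0, 5, 0, 0, 0], [0, −10, 10, 0, 0], [0, 10, −20, 10, 0], [0, −5, 15, −15, 5]] and W = [[5, 0, 0, 0, 0], [−10, 10, 0, 0, 0], [10, −20, 10, 0, 0], [−5, 15, −15, 5, 0], [1, −4, 6, −4, 1]]. Then M · L_m(z) = L_B(z) · W as matrices over ℂ[z], and det M ≠ 0 and det W ≠ 0; in particular the Bernstein pencil L_B(z) is strictly equivalent to the monomial pencil L_m(z). -/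
/-!
Expanding `(1 - z)^(n-k)` by the binomial theorem and using
`C(n,k) C(n-k,j-k) = C(n,j) C(j,k)` shows that the `j`-th monomial coefficient of
`∑ₖ yₖ Bₖⁿ(z)` is `aⱼ = ∑_{k ≤ j} (-1)^(j-k) C(n,j) C(j,k) yₖ`. Substituting these `aⱼ` into
`L_m(z)` turns `M L_m(z) = L_B(z) W` into 25 polynomial identities in `z`, checked entrywise.
`M` is block upper triangular and `W` lower triangular, with diagonals `1, 5, 10, 10, 5` and
`5, 10, 10, 5, 1`, so both determinants equal `2500`.
-/

open Polynomial

theorem coeff_one_sub_X_pow {R : Type*} [CommRing R] (m i : ℕ) :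
    ((1 - X : R[X]) ^ m).coeff i = (-1) ^ i * m.choose i := by
  have hterm : ∀ k, (-X : R[X]) ^ k * 1 ^ (m - k) * (m.choose k : R[X]) =
      C ((-1 : R) ^ k * m.choose k) * X ^ k := fun k => by
    simp only [neg_pow (X : R[X]), one_pow, mul_one, C_mul, C_pow, C_neg, C_1, map_natCast]
    ring
  rw [sub_eq_neg_add, add_pow, finsetSum_coeff]
  simp only [hterm, coeff_C_mul_X_pow]
  rw [Finset.sum_ite_eq, ite_eq_left_iff]
  intro hi
  rw [Nat.choose_eq_zero_of_lt (by simpa using hi), Nat.cast_zero, mul_zero]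

def bernsteinToMonomial {R : Type*} [CommRing R] (n : ℕ) (y : ℕ → R) (j : ℕ) : R :=
  ∑ k ∈ Finset.range (j + 1), (-1) ^ (j - k) * (n.choose j * j.choose k : R) * y k

theorem coeff_sum_bernstein {R : Type*} [CommRing R] (n : ℕ) (y : ℕ → R) (j : ℕ) :
    (∑ k ∈ Finset.range (n + 1),
        C (y k) * (C ((n.choose k : R)) * X ^ k * (1 - X) ^ (n - k))).coeff j =
      bernsteinToMonomial n y j := by
  simp only [finsetSum_coeff, coeff_C_mul, mul_assoc, coeff_X_pow_mul', coeff_one_sub_X_pow]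
  -- both sums effectively run over `k ≤ min n j`; extend them to a common range
  rw [bernsteinToMonomial,
    Finset.sum_subset (Finset.range_subset_range.mpr (by omega : n + 1 ≤ n + j + 1)),
    Finset.sum_subset (Finset.range_subset_range.mpr (by omega : j + 1 ≤ n + j + 1))]
  · refine Finset.sum_congr rfl fun k _ => ?_
    split_ifs with hkj
    · have hchoose : (n.choose j * j.choose k : R) = n.choose k * (n - k).choose (j - k) := by
        rw [← Nat.cast_mul, ← Nat.cast_mul, Nat.choose_mul hkj]
      rw [hchoose]
      ring
    · simp [Nat.choose_eq_zero_of_lt (not_le.mp hkj)]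
  · intro k _ hk
    simp [Nat.choose_eq_zero_of_lt (by simpa using hk : j < k)]
  · intro k _ hk
    simp [Nat.choose_eq_zero_of_lt (by simpa using hk : n < k)]

noncomputable def bernsteinCompanionPencil5 (y : ℕ → ℂ) : Matrix (Fin 5) (Fin 5) ℂ[X] :=
  !![C ((1:ℂ)/5) * C (y 5) * X + C (y 4) * (1 - X),
     C (y 3) * (1 - X), C (y 2) * (1 - X), C (y 1) * (1 - X), C (y 0) * (1 - X);
     X - 1, C ((2:ℂ)/4) * X, 0, 0, 0;
     0, X - 1, C ((3:ℂ)/3) * X, 0, 0;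
     0, 0, X - 1, C ((4:ℂ)/2) * X, 0;
     0, 0, 0, X - 1, C ((5:ℂ)/1) * X]

noncomputable def monomialCompanionPencil5 (a : ℕ → ℂ) : Matrix (Fin 5) (Fin 5) ℂ[X] :=
  !![C (a 5) * X + C (a 4), C (a 3), C (a 2), C (a 1), C (a 0);
     -1, X, 0, 0, 0;
     0, -1, X, 0, 0;
     0, 0, -1, X, 0;
     0, 0, 0, -1, X]

def pencilLeftTransform5 (y : ℕ → ℂ) : Matrix (Fin 5) (Fin 5) ℂ :=
  !![1, -10 * y 3 + 20 * y 2 - 15 * y 1 + 4 * y 0,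
        -10 * y 2 + 15 * y 1 - 6 * y 0, -5 * y 1 + 4 * y 0, -(y 0);
     0, 5, 0, 0, 0;
     0, -10, 10, 0, 0;
     0, 10, -20, 10, 0;
     0, -5, 15, -15, 5]

def pencilRightTransform5 : Matrix (Fin 5) (Fin 5) ℂ :=
  !![5, 0, 0, 0, 0;
     -10, 10, 0, 0, 0;
     10, -20, 10, 0, 0;
     -5, 15, -15, 5, 0;
     1, -4, 6, -4, 1]

theorem det_pencilLeftTransform5 (y : ℕ → ℂ) : (pencilLeftTransform5 y).det = 2500 := by
  simp [pencilLeftTransform5, Matrix.det_succ_column_zero, Fin.sum_univ_succ]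
  norm_num

theorem det_pencilRightTransform5 : pencilRightTransform5.det = 2500 := by
  simp [pencilRightTransform5, Matrix.det_succ_row_zero, Fin.sum_univ_succ]
  norm_num

theorem pencilLeftTransform5_mul_monomialCompanionPencil5 (y a : ℕ → ℂ)
    (ha : ∀ k < 6, a k = bernsteinToMonomial 5 y k) :
    (pencilLeftTransform5 y).map C * monomialCompanionPencil5 a =
      bernsteinCompanionPencil5 y * pencilRightTransform5.map C := by
  simp only [monomialCompanionPencil5, ha 0 (by norm_num), ha 1 (by norm_num), ha 2 (by norm_num),
    ha 3 (by norm_num), ha 4 (by norm_num), ha 5 (by norm_num)]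
  simp only [bernsteinToMonomial, Finset.sum_range_succ, Finset.sum_range_zero]
  norm_num [Nat.choose]
  ext i j : 1
  refine Polynomial.funext fun x => ?_
  fin_cases i <;> fin_cases j <;>
    simp [pencilLeftTransform5, bernsteinCompanionPencil5, pencilRightTransform5,
      Matrix.mul_apply, Fin.sum_univ_five] <;> ring

/-- Strict equivalence of the degree-5 Bernstein companion pencil
`L_B(z)` to the monomial second companion pencil `L_m(z)`: with the explicit
constant matrices `M`, `W` one has `M·L_m(z) = L_B(z)·W` over `ℂ[z]`, and
`det M ≠ 0`, `det W ≠ 0`.  Here `a_0, …, a_5` are the monomial coefficients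
determined by `Σ y_k B_k^5(z) = Σ a_k z^k`. -/
theorem bernstein_strict_equivalence_deg5 (y a : ℕ → ℂ)
    (ha : ∑ k ∈ Finset.range 6,
        C (y k) * (C ((Nat.choose 5 k : ℂ)) * X ^ k * (1 - X) ^ (5 - k)) =
      ∑ k ∈ Finset.range 6, C (a k) * X ^ k)
    (LB Lm : Matrix (Fin 5) (Fin 5) (Polynomial ℂ))
    (hLB : LB = !![C ((1:ℂ)/5) * C (y 5) * X + C (y 4) * (1 - X),
                   C (y 3) * (1 - X), C (y 2) * (1 - X), C (y 1) * (1 - X), C (y 0) * (1 - X);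
                   X - 1, C ((2:ℂ)/4) * X, 0, 0, 0;
                   0, X - 1, C ((3:ℂ)/3) * X, 0, 0;
                   0, 0, X - 1, C ((4:ℂ)/2) * X, 0;
                   0, 0, 0, X - 1, C ((5:ℂ)/1) * X])
    (hLm : Lm = !![C (a 5) * X + C (a 4), C (a 3), C (a 2), C (a 1), C (a 0);
                   -1, X, 0, 0, 0;
                   0, -1, X, 0, 0;
                   0, 0, -1, X, 0;
                   0, 0, 0, -1, X])
    (M W : Matrix (Fin 5) (Fin 5) ℂ)
    (hM : M = !![1, -10 * y 3 + 20 * y 2 - 15 * y 1 + 4 * y 0,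
                    -10 * y 2 + 15 * y 1 - 6 * y 0, -5 * y 1 + 4 * y 0, -(y 0);
                 0, 5, 0, 0, 0;
                 0, -10, 10, 0, 0;
                 0, 10, -20, 10, 0;
                 0, -5, 15, -15, 5])
    (hW : W = !![5, 0, 0, 0, 0;
                 -10, 10, 0, 0, 0;
                 10, -20, 10, 0, 0;
                 -5, 15, -15, 5, 0;
                 1, -4, 6, -4, 1]) :
    M.map C * Lm = LB * W.map C ∧ M.det ≠ 0 ∧ W.det ≠ 0 := by
  have hcoeff : ∀ k < 6, a k = bernsteinToMonomial 5 y k := fun k hk =>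
    calc a k = (∑ k ∈ Finset.range 6, C (a k) * X ^ k).coeff k := by
          simp [finsetSum_coeff, hk]
      _ = bernsteinToMonomial 5 y k := by rw [← ha]; exact coeff_sum_bernstein 5 y k
  subst hLB hLm hM hW
  refine ⟨pencilLeftTransform5_mul_monomialCompanionPencil5 y a hcoeff, ?_, ?_⟩
  · exact (det_pencilLeftTransform5 y).trans_ne (by norm_num)
  · exact det_pencilRightTransform5.trans_ne (by norm_num)
end

section
/- Let R be a commutative ring, ℓ ≥ 0, and y_0, …, y_ℓ ∈ R. Define d_k = Σ_{j=0}^k C(k,j)·y_{ℓ−j} for 0 ≤ k ≤ ℓ. Then the following identity of polynomials in R[z] holds: Σ_{k=0}^ℓ d_k B_k^ℓ(z) = Σ_{k=0}^ℓ C(ℓ,k)·y_k·z^{ℓ−k}. Equivalently (over ℂ, for every z ≠ −1), Σ_{k=0}^ℓ d_k B_k^ℓ(z) = (z+1)^ℓ · p(1/(z+1)), where p(w) = Σ_{k=0}^ℓ y_k B_k^ℓ(w); that is, the Bernstein coefficients of the reversal rev p(z) = (z+1)^ℓ p(1/(z+1)) of a grade-ℓ polynomial p given in the Bernstein basis are exactly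 the d_k. -/
/-!
Expanding `d_k` and exchanging the two sums, the coefficient of `y_{ℓ-j}` on the left is
`∑_k C(k,j) B_k^ℓ`. Since `C(k,j) C(ℓ,k) = C(ℓ,j) C(ℓ-j,k-j)`, this equals
`C(ℓ,j) X^j ∑_m B_m^{ℓ-j} = C(ℓ,j) X^j` by the partition of unity; the reflection `j ↦ ℓ - j`
then gives the right-hand side.
-/

open Polynomial Finset

namespace bernsteinPolynomial

variable {R : Type*} [CommRing R]

theorem choose_mul {n j k : ℕ} (hjk : j ≤ k) :
    (k.choose j : R[X]) * bernsteinPolynomial R n k =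
      (n.choose j : R[X]) * X ^ j * bernsteinPolynomial R (n - j) (k - j) := by
  have hchoose : (n.choose k : R[X]) * k.choose j = n.choose j * (n - j).choose (k - j) := by
    rw [← Nat.cast_mul, ← Nat.cast_mul, Nat.choose_mul hjk]
  have hpow : (X : R[X]) ^ k = X ^ j * X ^ (k - j) := by rw [← pow_add, Nat.add_sub_cancel' hjk]
  have hsub : n - j - (k - j) = n - k := by omega
  simp only [bernsteinPolynomial, hpow, hsub]
  linear_combination X ^ j * X ^ (k - j) * (1 - X) ^ (n - k) * hchoose

theorem sum_choose_mul (n j : ℕ) :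
    ∑ k ∈ range (n + 1), (k.choose j : R[X]) * bernsteinPolynomial R n k =
      (n.choose j : R[X]) * X ^ j := by
  rcases lt_or_ge n j with hnj | hjn
  · rw [Nat.choose_eq_zero_of_lt hnj]
    refine (sum_eq_zero fun k hk => ?_).trans (by simp)
    rw [Nat.choose_eq_zero_of_lt (by rw [mem_range] at hk; omega), Nat.cast_zero, zero_mul]
  have hlow : ∑ k ∈ range j, (k.choose j : R[X]) * bernsteinPolynomial R n k = 0 :=
    sum_eq_zero fun k hk => by
      rw [Nat.choose_eq_zero_of_lt (mem_range.mp hk), Nat.cast_zero, zero_mul]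
  rw [← sum_range_add_sum_Ico _ (by omega : j ≤ n + 1), hlow, zero_add, sum_Ico_eq_sum_range,
    show n + 1 - j = n - j + 1 by omega]
  simp only [choose_mul (Nat.le_add_right j _), Nat.add_sub_cancel_left, ← mul_sum,
    bernsteinPolynomial.sum, mul_one]

end bernsteinPolynomial

/-- Let `R` be a commutative ring, `ℓ ≥ 0`, `y_0, …, y_ℓ ∈ R`, and
`d_k = Σ_{j=0}^k C(k,j)·y_{ℓ−j}`.  Then in `R[z]`,
`Σ_{k=0}^ℓ d_k B_k^ℓ(z) = Σ_{k=0}^ℓ C(ℓ,k)·y_k·z^{ℓ−k}`,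
i.e. the `d_k` are the Bernstein coefficients of the reversal
`rev p(z) = (z+1)^ℓ p(1/(z+1))` of `p(w) = Σ y_k B_k^ℓ(w)`. -/
theorem bernstein_reversal_coefficients
    {R : Type*} [CommRing R] (ℓ : ℕ) (y : ℕ → R) :
    ∑ k ∈ Finset.range (ℓ + 1),
      Polynomial.C (∑ j ∈ Finset.range (k + 1), (Nat.choose k j : R) * y (ℓ - j)) *
        (Polynomial.C ((Nat.choose ℓ k : R)) * Polynomial.X ^ k *
          (1 - Polynomial.X) ^ (ℓ - k)) =
    ∑ k ∈ Finset.range (ℓ + 1),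
      Polynomial.C ((Nat.choose ℓ k : R) * y k) * Polynomial.X ^ (ℓ - k) := by
  have hfull : ∀ k ∈ range (ℓ + 1), ∑ j ∈ range (k + 1), (k.choose j : R) * y (ℓ - j) =
      ∑ j ∈ range (ℓ + 1), (k.choose j : R) * y (ℓ - j) := fun k hk =>
    sum_subset (range_subset_range.mpr (by rw [mem_range] at hk; omega)) fun j _ hj => by
      rw [Nat.choose_eq_zero_of_lt (by rw [mem_range] at hj; omega), Nat.cast_zero, zero_mul]
  calc _ = ∑ k ∈ range (ℓ + 1), ∑ j ∈ range (ℓ + 1),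
        C (y (ℓ - j)) * ((k.choose j : R[X]) * bernsteinPolynomial R ℓ k) := by
          refine sum_congr rfl fun k hk => ?_
          rw [hfull k hk, map_sum, sum_mul]
          refine sum_congr rfl fun j _ => ?_
          simp only [bernsteinPolynomial, map_mul, map_natCast]
          ring
    _ = ∑ j ∈ range (ℓ + 1), C (y (ℓ - j)) * ((ℓ.choose j : R[X]) * X ^ j) := by
          rw [sum_comm]
          simp only [← mul_sum, bernsteinPolynomial.sum_choose_mul]
    _ = _ := by
          rw [← sum_range_reflect _ (ℓ + 1)]
          refine sum_congr rfl fun j hj => ?_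
          have hjℓ : j ≤ ℓ := Nat.lt_succ_iff.mp (mem_range.mp hj)
          rw [Nat.add_sub_cancel, Nat.sub_sub_self hjℓ, Nat.choose_symm hjℓ, map_mul, map_natCast]
          ring
end

section
/- Let F be a field, ℓ ≥ 0, and let τ_0, …, τ_ℓ ∈ F be distinct. Let β_k = ∏_{j≠k} 1/(τ_k − τ_j) be the barycentric weights and w_k(z) = β_k ∏_{j≠k} (z − τ_j) the Lagrange basis polynomials. Let p_0, …, p_ℓ ∈ F and p(z) = Σ_{k=0}^ℓ p_k w_k(z). Define the (ℓ+2)×(ℓ+2) matrix L(z) over F[z] (rows and columns indexed 0, …, ℓ+1): L_{0,0} = 0; L_{0,1+i} = −p_{ℓ−i} for 0 ≤ i ≤ ℓ; L_{1+i,0} = β_{ℓ−i} for 0 ≤ i ≤ ℓ; L_{1+i,1+i} = z − τ_{ℓ−i} for 0 ≤ i ≤ ℓ; all other entries 0. Then det L(z) = p(z). -/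
/-!
After reversing the order of the nodes, `L(z)` is the bordered matrix
`[[0, -pᵀ], [β, diag (z - τ)]]`. Expanding the determinant linearly in the border row, the
entry `-p_k` contributes `-p_k` times the determinant of the same matrix with border row `e_k`;
subtracting `(z - τ_k)` times the border row from row `k` and then swapping these two rows
leaves a block triangular matrix, whose determinant is `-β_k ∏_{j ≠ k} (z - τ_j)`.
-/

open Finset Matrix Polynomial

namespace Matrix

variable {R ι : Type*} [CommRing R] [DecidableEq ι]

def arrowhead (a : R) (b c d : ι → R) : Matrix (Unit ⊕ ι) (Unit ⊕ ι) R :=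
  fromBlocks (of fun _ _ => a) (replicateRow Unit b) (replicateCol Unit c) (diagonal d)

theorem updateRow_arrowhead_inl (a a' : R) (b b' c d : ι → R) :
    (arrowhead a b c d).updateRow (.inl ()) (Sum.elim (fun _ => a') b') = arrowhead a' b' c d := by
  ext (_ | i) (_ | j) <;> simp [arrowhead, updateRow_apply]

theorem det_arrowhead_one_zero [Fintype ι] (c d : ι → R) :
    (arrowhead 1 0 c d).det = ∏ i, d i := by
  simp [arrowhead, det_unique]

theorem det_arrowhead_zero_single [Fintype ι] (c d : ι → R) (i : ι) :
    (arrowhead 0 (Pi.single i 1) c d).det = -(c i * ∏ j ∈ univ.erase i, d j) := by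
  set A := arrowhead 0 (Pi.single i 1) c d
  set B := A.updateRow (.inr i) (c i • Pi.single (.inl ()) 1)
  have hrow : B (.inr i) + d i • B (.inl ()) = A (.inr i) := by
    ext (_ | j) <;> simp [A, B, arrowhead, Pi.single_apply, diagonal_apply, eq_comm]
  have hswap : A.updateRow (.inr i) (Pi.single (.inl ()) 1) =
      (arrowhead 1 0 (Function.update c i 0) (Function.update d i 1)).submatrix
        (Equiv.swap (.inl ()) (.inr i)) id := by
    ext (_ | j) s
    · cases s <;> simp [A, arrowhead, Pi.single_apply, diagonal_apply, eq_comm]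
    obtain rfl | hji := eq_or_ne j i
    · cases s <;> simp [A, arrowhead]
    · rcases s with _ | k
      · simp [A, arrowhead, Equiv.swap_apply_of_ne_of_ne, hji]
      · simp [A, arrowhead, Equiv.swap_apply_of_ne_of_ne, hji, diagonal_apply]
  calc A.det = (B.updateRow (.inr i) (B (.inr i) + d i • B (.inl ()))).det := by
        rw [hrow, updateRow_idem, updateRow_eq_self]
    _ = B.det := det_updateRow_add_smul_self _ Sum.inr_ne_inl _
    _ = -(c i * ∏ j ∈ univ.erase i, d j) := by
        rw [det_updateRow_smul, hswap, det_permute, Equiv.Perm.sign_swap Sum.inl_ne_inr,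
          det_arrowhead_one_zero, prod_update_of_mem (mem_univ i), one_mul,
          sdiff_singleton_eq_erase]
        simp

theorem det_arrowhead [Fintype ι] (a : R) (b c d : ι → R) :
    (arrowhead a b c d).det = a * ∏ i, d i - ∑ i, b i * c i * ∏ j ∈ univ.erase i, d j := by
  have single_inl : (Pi.single (.inl ()) 1 : Unit ⊕ ι → R) = Sum.elim (fun _ => 1) 0 := by
    ext (_ | i) <;> simp
  have single_inr (i : ι) :
      (Pi.single (.inr i) 1 : Unit ⊕ ι → R) = Sum.elim (fun _ => 0) (Pi.single i 1) := by
    ext (_ | j) <;> simp [Pi.single_apply]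
  rw [det_eq_sum_mul_adjugate_row _ (.inl ()), Fintype.sum_sum_type]
  simp only [adjugate_apply, single_inl, single_inr, updateRow_arrowhead_inl,
    det_arrowhead_one_zero, det_arrowhead_zero_single]
  simp [arrowhead, sub_eq_add_neg, mul_assoc]

end Matrix

theorem Fin.prod_univ_erase_eq_prod_range_erase {M : Type*} [CommMonoid M] {n : ℕ} (g : ℕ → M)
    (i : Fin n) : ∏ j ∈ univ.erase i, g j = ∏ j ∈ (range n).erase i, g j := by
  rw [← Nat.Iio_eq_range, ← Fin.map_valEmbedding_univ, show (i : ℕ) = Fin.valEmbedding i from rfl,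
    ← map_erase, prod_map]
  rfl

theorem lagrange_companion_pencil_det_general
    {F : Type*} [Field F] (ℓ : ℕ) (τ : ℕ → F)
    (β : ℕ → F)
    (p : ℕ → F) :
    Matrix.det (Matrix.of (fun r c : Fin (ℓ + 2) =>
      if r.val = 0 then
        (if c.val = 0 then 0 else -Polynomial.C (p (ℓ - (c.val - 1))))
      else if c.val = 0 then Polynomial.C (β (ℓ - (r.val - 1)))
      else if r = c then Polynomial.X - Polynomial.C (τ (ℓ - (r.val - 1)))
      else 0)) =
    ∑ k ∈ Finset.range (ℓ + 1),
      Polynomial.C (p k * β k) *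
        ∏ j ∈ (Finset.range (ℓ + 1)).erase k,
          (Polynomial.X - Polynomial.C (τ j)) := by
  let e : Fin (ℓ + 2) ≃ Unit ⊕ Fin (ℓ + 1) := (finSuccEquiv (ℓ + 1)).trans <|
    (Equiv.optionCongr Fin.revPerm).trans <| (Equiv.optionEquivSumPUnit _).trans (Equiv.sumComm _ _)
  calc _ = ((arrowhead 0 (fun k : Fin (ℓ + 1) => -C (p k)) (fun k => C (β k))
          (fun k => X - C (τ k))).submatrix e e).det := by
        congr 1
        ext r c
        induction r using Fin.cases <;> induction c using Fin.cases <;>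
          simp [e, arrowhead, diagonal_apply]
    _ = _ := by
        rw [det_submatrix_equiv_self, det_arrowhead, zero_mul, zero_sub, ← sum_neg_distrib,
          ← Fin.sum_univ_eq_sum_range]
        refine sum_congr rfl fun k _ => ?_
        rw [Fin.prod_univ_erase_eq_prod_range_erase (fun j => X - C (τ j)), C_mul]
        ring

/-- For distinct nodes `τ_0, …, τ_ℓ` in a field `F`, barycentric weights
`β_k = ∏_{j≠k} 1/(τ_k − τ_j)`, Lagrange basis polynomials
`w_k(z) = β_k ∏_{j≠k}(z − τ_j)`, values `p_0, …, p_ℓ` and `p(z) = Σ p_k w_k(z)`,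
the `(ℓ+2)×(ℓ+2)` Lagrange companion pencil `L(z)` (upward arrowhead form) with
`L_{0,0}=0`, `L_{0,1+i} = −p_{ℓ−i}`, `L_{1+i,0} = β_{ℓ−i}`, `L_{1+i,1+i} = z−τ_{ℓ−i}`
and zeros elsewhere satisfies `det L(z) = p(z)`. -/
theorem lagrange_companion_pencil_det
    {F : Type*} [Field F] (ℓ : ℕ) (τ : ℕ → F)
    (hτ : ∀ j ≤ ℓ, ∀ k ≤ ℓ, j ≠ k → τ j ≠ τ k)
    (β : ℕ → F)
    (hβ : ∀ k ≤ ℓ, β k = ∏ j ∈ (Finset.range (ℓ + 1)).erase k, (τ k - τ j)⁻¹)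
    (p : ℕ → F) :
    Matrix.det (Matrix.of (fun r c : Fin (ℓ + 2) =>
      if r.val = 0 then
        (if c.val = 0 then 0 else -Polynomial.C (p (ℓ - (c.val - 1))))
      else if c.val = 0 then Polynomial.C (β (ℓ - (r.val - 1)))
      else if r = c then Polynomial.X - Polynomial.C (τ (ℓ - (r.val - 1)))
      else 0)) =
    ∑ k ∈ Finset.range (ℓ + 1),
      Polynomial.C (p k * β k) *
        ∏ j ∈ (Finset.range (ℓ + 1)).erase k,
          (Polynomial.X - Polynomial.C (τ j)) :=
  lagrange_companion_pencil_det_general ℓ τ β p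
end

section
/- Let F be a field, n ≥ 1, ℓ ≥ 0, and let τ_0, …, τ_ℓ ∈ F be distinct with barycentric weights β_k = ∏_{j≠k} 1/(τ_k − τ_j). Let P(z) = Σ_{m=0}^ℓ A_m z^m with A_m ∈ F^{n×n}, and set P_k = P(τ_k). Define (ℓ+2)×(ℓ+2) block matrices with n×n blocks: C_{L,1} = diag(0, I_n, …, I_n); C_{L,0} with first block row (0, −P_ℓ, −P_{ℓ−1}, …, −P_0), first block column below the corner (β_ℓ I_n, β_{ℓ−1} I_n, …, β_0 I_n), diagonal blocks τ_ℓ I_n, …, τ_0 I_n in positions (1+i, 1+i) for 0 ≤ i ≤ ℓ, other blocks 0; C_{M,1} = diag(0, I_n, …, I_n); C_{M,0} with first block row (0, −A_ℓ, −A_{ℓ−1}, …, −A_0), subdiagonal blocks I_n in positions (i, i−1) for 2 ≤ i ≤ ℓ+2, other blocks 0. Let V be the (ℓ+1)×(ℓ+1) Vandermonde matrix with V_{i,j} = τ_{ℓ+1−j}^{ℓ+1−i} for 1 ≤ i, j ≤ ℓ+1, let the node polynomial be w(z) = ∏_{k=0}^ℓ (z − τ_k) = z^{ℓ+1} + q_ℓ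 z^ℓ + ⋯ + q_0, and let q be the block row (q_ℓ I_n, q_{ℓ−1} I_n, …, q_0 I_n). Define the constant matrices U = diag(I_n, V ⊗ I_n) and W = [[I_n, q], [0, V^{−1} ⊗ I_n]]. Then U·C_{L,1}·W = C_{M,1} and U·C_{L,0}·W = C_{M,0}; thus the Lagrange-basis pencil z·C_{L,1} − C_{L,0} is strictly equivalent to the monomial-basis pencil z·C_{M,1} − C_{M,0} (the second companion pencil of P regarded as a matrix polynomial of grade ℓ+2). Moreover det U = ±∏_{0≤i<j≤ℓ} (τ_j − τ_i)^n, which is nonzero. -/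
/-!
View both pencils as bordered block matrices `[[a, r], [c, B]]` whose blocks lie in the ring
`R = F^{n×n}`. Multiplying out `diag(1, V) · [[0, -p], [b, D]] · [[1, q], [0, V⁻¹]]` reduces the
claim to three facts about the reversed Vandermonde matrix `V`:
* `V b = e₀`, because `∑ₖ βₖ τₖ^m` is the coefficient of `z^ℓ` in the interpolant of `z^m`,
  i.e. `1` for `m = ℓ` and `0` for `m < ℓ`;
* `V · diag(τ) = (S - e₀ q) · V` with `S` the lower shift, because `w(τₖ) = 0` expresses
  `τₖ^(ℓ+1)` through lower powers;
* the row of values `P(τₖ)` is the row of coefficients `Aₘ` times `V`.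
Finally `U = diag(1, V) ⊗ Iₙ`, so `det U = (det V)^n`.
-/

open Polynomial Finset Matrix Kronecker

namespace Matrix

variable {α : Type*} {m : ℕ}

def bordered (a : α) (r c : Fin m → α) (B : Matrix (Fin m) (Fin m) α) :
    Matrix (Fin (m + 1)) (Fin (m + 1)) α :=
  of (Fin.cons (Fin.cons a r) fun i => Fin.cons (c i) (B i))

@[simp] theorem bordered_zero_zero (a : α) (r c : Fin m → α) (B : Matrix (Fin m) (Fin m) α) :
    bordered a r c B 0 0 = a := rfl

@[simp] theorem bordered_zero_succ (a : α) (r c : Fin m → α) (B : Matrix (Fin m) (Fin m) α)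
    (j : Fin m) : bordered a r c B 0 j.succ = r j := rfl

@[simp] theorem bordered_succ_zero (a : α) (r c : Fin m → α) (B : Matrix (Fin m) (Fin m) α)
    (i : Fin m) : bordered a r c B i.succ 0 = c i := rfl

@[simp] theorem bordered_succ_succ (a : α) (r c : Fin m → α) (B : Matrix (Fin m) (Fin m) α)
    (i j : Fin m) : bordered a r c B i.succ j.succ = B i j := rfl

theorem submatrix_succ_bordered (a : α) (r c : Fin m → α) (B : Matrix (Fin m) (Fin m) α) :
    (bordered a r c B).submatrix Fin.succ Fin.succ = B := rfl

theorem bordered_map {β : Type*} (f : α → β) (a : α) (r c : Fin m → α)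
    (B : Matrix (Fin m) (Fin m) α) :
    (bordered a r c B).map f = bordered (f a) (f ∘ r) (f ∘ c) (B.map f) := by
  ext i j
  cases i using Fin.cases <;> cases j using Fin.cases <;> rfl

theorem bordered_mul [Semiring α] (a a' : α) (r c r' c' : Fin m → α)
    (B B' : Matrix (Fin m) (Fin m) α) :
    bordered a r c B * bordered a' r' c' B' =
      bordered (a * a' + r ⬝ᵥ c') (a • r' + r ᵥ* B') (MulOpposite.op a' • c + B *ᵥ c')
        (vecMulVec c r' + B * B') := by
  ext i j
  cases i using Fin.cases <;> cases j using Fin.cases <;>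
    simp [mul_apply, Fin.sum_univ_succ, dotProduct, vecMul, mulVec, vecMulVec]

theorem det_bordered_zero_row [CommRing α] (a : α) (c : Fin m → α)
    (B : Matrix (Fin m) (Fin m) α) : (bordered a 0 c B).det = a * B.det := by
  rw [det_succ_row_zero, Fin.sum_univ_succ]
  simp [submatrix_succ_bordered]

theorem comp_map_algebraMap {F ι κ n : Type*} [CommSemiring F] [Fintype n] [DecidableEq n]
    (M : Matrix ι κ F) :
    comp ι κ n n F (M.map (algebraMap F (Matrix n n F))) = M ⊗ₖ 1 := by
  ext ⟨i, s⟩ ⟨j, t⟩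
  simp [algebraMap_matrix_apply, one_apply]

section Conjugation

variable [Ring α]

theorem bordered_conj_zero_one {V W : Matrix (Fin m) (Fin m) α} (q : Fin m → α)
    (hVW : V * W = 1) :
    bordered 1 0 0 V * bordered 0 0 0 1 * bordered 1 q 0 W = bordered 0 0 0 1 := by
  simp [bordered_mul, hVW]

theorem bordered_conj_of_companion {V W D S : Matrix (Fin m) (Fin m) α} {p a b e q : Fin m → α}
    (hVW : V * W = 1) (hp : p = a ᵥ* V) (hb : V *ᵥ b = e)
    (hD : V * D = (S - vecMulVec e q) * V) :
    bordered 1 0 0 V * bordered 0 (-p) b D * bordered 1 q 0 W = bordered 0 (-a) e S := by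
  have hS : vecMulVec e q + V * D * W = S := by
    rw [hD, Matrix.mul_assoc, hVW, Matrix.mul_one, add_sub_cancel]
  simp [bordered_mul, hb, hS, hp, neg_vecMul, vecMul_vecMul, hVW]

end Conjugation

end Matrix

theorem Fin.sum_univ_sub_eq_sum_range {M : Type*} [AddCommMonoid M] (ℓ : ℕ) (f : ℕ → M) :
    ∑ j : Fin (ℓ + 1), f (ℓ - j) = ∑ k ∈ range (ℓ + 1), f k := by
  rw [← Fin.sum_univ_eq_sum_range, ← Equiv.sum_comp Fin.revPerm]
  exact sum_congr rfl fun j _ => by simp [Fin.val_rev, Nat.sub_sub_self (Fin.is_le j)]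

theorem Fin.prod_univ_prod_Ioi_eq_prod_range {M : Type*} [CommMonoid M] (N : ℕ)
    (g : ℕ → ℕ → M) : ∏ i : Fin N, ∏ j ∈ Ioi i, g i j = ∏ j ∈ range N, ∏ i ∈ range j, g i j := by
  rw [prod_comm' (t' := univ) (s' := Iio) (by simp), ← Fin.prod_univ_eq_prod_range]
  refine prod_congr rfl fun j _ => ?_
  rw [← Nat.Iio_eq_range, ← Fin.map_valEmbedding_Iio, prod_map]
  rfl

namespace Lagrange

variable {ι : Type*} {s : Finset ι}

theorem sum_nodalWeight_mul_pow {F : Type*} [Field F] [DecidableEq ι] {v : ι → F}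
    (hvs : Set.InjOn v s) {m : ℕ} (hm : m < #s) :
    ∑ i ∈ s, nodalWeight s v i * v i ^ m = if m = #s - 1 then 1 else 0 :=
  calc ∑ i ∈ s, nodalWeight s v i * v i ^ m
      = ∑ i ∈ s, (X ^ m : F[X]).eval (v i) / ∏ j ∈ s.erase i, (v i - v j) := by
        refine sum_congr rfl fun i _ => ?_
        rw [nodalWeight, prod_inv_distrib, eval_pow, eval_X, div_eq_inv_mul]
    _ = (X ^ m : F[X]).coeff (#s - 1) :=
        (coeff_eq_sum hvs (by rw [degree_X_pow]; exact_mod_cast hm)).symm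
    _ = if m = #s - 1 then 1 else 0 := by rw [coeff_X_pow]; exact if_congr eq_comm rfl rfl

theorem pow_card_eq_neg_sum_coeff_nodal {R : Type*} [CommRing R] [Nontrivial R] {v : ι → R}
    {i : ι} (hi : i ∈ s) :
    v i ^ #s = -∑ k ∈ range #s, (nodal s v).coeff k * v i ^ k := by
  have h := eval_nodal_at_node (v := v) hi
  rw [(nodal_monic (s := s) (v := v)).as_sum, natDegree_nodal] at h
  simp only [eval_add, eval_pow, eval_X, eval_finsetSum, eval_mul, eval_C] at h
  exact eq_neg_of_add_eq_zero_left h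

end Lagrange

section Nodes

variable {F : Type*}

def revVandermonde [Monoid F] (ℓ : ℕ) (τ : ℕ → F) : Matrix (Fin (ℓ + 1)) (Fin (ℓ + 1)) F :=
  of fun i j => τ (ℓ - j) ^ (ℓ - i)

def lowerShift [Zero F] [One F] (m : ℕ) : Matrix (Fin m) (Fin m) F :=
  of fun i j => if (j : ℕ) + 1 = i then 1 else 0

theorem det_revVandermonde [CommRing F] (ℓ : ℕ) (τ : ℕ → F) :
    (revVandermonde ℓ τ).det = ∏ j ∈ range (ℓ + 1), ∏ i ∈ range j, (τ j - τ i) := by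
  have h : revVandermonde ℓ τ =
      ((vandermonde fun i : Fin (ℓ + 1) => τ i)ᵀ).submatrix Fin.revPerm Fin.revPerm := by
    ext i j
    simp [revVandermonde, vandermonde_apply, Fin.val_rev]
  rw [h, det_submatrix_equiv_self, det_transpose, det_vandermonde,
    Fin.prod_univ_prod_Ioi_eq_prod_range (ℓ + 1) fun i j => τ j - τ i]

theorem revVandermonde_mul_diagonal [CommRing F] [Nontrivial F] (ℓ : ℕ) (τ : ℕ → F) :
    revVandermonde ℓ τ * diagonal (fun j : Fin (ℓ + 1) => τ (ℓ - j)) =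
      (lowerShift (ℓ + 1) - vecMulVec (Pi.single 0 1)
        (fun j : Fin (ℓ + 1) => (Lagrange.nodal (range (ℓ + 1)) τ).coeff (ℓ - j))) *
        revVandermonde ℓ τ := by
  ext i j
  rw [mul_diagonal, sub_mul]
  cases i using Fin.cases with
  | zero =>
    have h := Lagrange.pow_card_eq_neg_sum_coeff_nodal (v := τ)
      (mem_range.2 (Nat.lt_succ_of_le (Nat.sub_le ℓ j)))
    rw [card_range, ← Fin.sum_univ_sub_eq_sum_range ℓ fun k =>
      (Lagrange.nodal (range (ℓ + 1)) τ).coeff k * τ (ℓ - j) ^ k] at h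
    simpa [lowerShift, mul_apply, vecMulVec, revVandermonde, ← pow_succ] using h
  | succ i =>
    simp [lowerShift, mul_apply, vecMulVec, revVandermonde, Fin.sum_univ_castSucc, i.isLt.ne',
      Fin.val_inj, ← pow_succ, show ℓ - (i + 1) + 1 = ℓ - i by omega]

theorem sum_pow_smul_eq_vecMul_revVandermonde {R : Type*} [CommRing F] [Ring R] [Algebra F R]
    (ℓ : ℕ) (τ : ℕ → F) (A : ℕ → R) :
    (fun j : Fin (ℓ + 1) => ∑ m ∈ range (ℓ + 1), τ (ℓ - j) ^ m • A m) =
      (fun i : Fin (ℓ + 1) => A (ℓ - i)) ᵥ* (revVandermonde ℓ τ).map (algebraMap F R) := by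
  ext j
  simp only [vecMul, dotProduct, map_apply, revVandermonde, of_apply]
  rw [Fin.sum_univ_sub_eq_sum_range ℓ fun k => A k * algebraMap F R (τ (ℓ - j) ^ k)]
  exact sum_congr rfl fun m _ => by rw [Algebra.smul_def, Algebra.commutes]

variable [Field F] {ℓ : ℕ} {τ : ℕ → F}

theorem prod_range_prod_range_sub_ne_zero (hτ : Set.InjOn τ (range (ℓ + 1))) :
    ∏ j ∈ range (ℓ + 1), ∏ i ∈ range j, (τ j - τ i) ≠ 0 := by
  simp only [prod_ne_zero_iff, mem_range, sub_ne_zero]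
  intro j hj i hi h
  exact hi.ne' (hτ (mem_range.2 hj) (mem_range.2 (hi.trans hj)) h)

theorem isUnit_det_revVandermonde (hτ : Set.InjOn τ (range (ℓ + 1))) :
    IsUnit (revVandermonde ℓ τ).det := by
  rw [isUnit_iff_ne_zero, det_revVandermonde]
  exact prod_range_prod_range_sub_ne_zero hτ

theorem revVandermonde_map_mul_map_inv {R : Type*} [Semiring R] [Algebra F R]
    (hτ : Set.InjOn τ (range (ℓ + 1))) :
    (revVandermonde ℓ τ).map (algebraMap F R) * (revVandermonde ℓ τ)⁻¹.map (algebraMap F R) = 1 := by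
  rw [← Matrix.map_mul, mul_nonsing_inv _ (isUnit_det_revVandermonde hτ),
    Matrix.map_one _ (map_zero _) (map_one _)]

theorem revVandermonde_mulVec_nodalWeight (hτ : Set.InjOn τ (range (ℓ + 1))) :
    revVandermonde ℓ τ *ᵥ (fun j => Lagrange.nodalWeight (range (ℓ + 1)) τ (ℓ - j)) =
      Pi.single 0 1 := by
  ext i
  calc (revVandermonde ℓ τ *ᵥ fun j => Lagrange.nodalWeight (range (ℓ + 1)) τ (ℓ - j)) i
      = ∑ j : Fin (ℓ + 1),
          Lagrange.nodalWeight (range (ℓ + 1)) τ (ℓ - j) * τ (ℓ - j) ^ (ℓ - i) := by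
        simp [mulVec, dotProduct, revVandermonde, mul_comm]
    _ = ∑ k ∈ range (ℓ + 1), Lagrange.nodalWeight (range (ℓ + 1)) τ k * τ k ^ (ℓ - i) :=
        Fin.sum_univ_sub_eq_sum_range ℓ fun k =>
          Lagrange.nodalWeight (range (ℓ + 1)) τ k * τ k ^ (ℓ - i)
    _ = if ℓ - i = ℓ then 1 else 0 := by
        simpa using Lagrange.sum_nodalWeight_mul_pow hτ (m := ℓ - i) (by simp)
    _ = (Pi.single 0 1 : Fin (ℓ + 1) → F) i := by
        rw [Pi.single_apply]
        refine if_congr ?_ rfl rfl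
        simp only [Fin.ext_iff, Fin.val_zero]
        omega

theorem bordered_conj_lagrange_eq_monomial {R : Type*} [Ring R] [Algebra F R]
    (hτ : Set.InjOn τ (range (ℓ + 1))) (A : ℕ → R) :
    bordered 1 0 0 ((revVandermonde ℓ τ).map (algebraMap F R)) *
      bordered 0 (-fun j : Fin (ℓ + 1) => ∑ m ∈ range (ℓ + 1), τ (ℓ - j) ^ m • A m)
        (fun i => algebraMap F R (Lagrange.nodalWeight (range (ℓ + 1)) τ (ℓ - i)))
        ((diagonal fun i : Fin (ℓ + 1) => τ (ℓ - i)).map (algebraMap F R)) *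
      bordered 1 (fun j => algebraMap F R ((Lagrange.nodal (range (ℓ + 1)) τ).coeff (ℓ - j))) 0
        ((revVandermonde ℓ τ)⁻¹.map (algebraMap F R)) =
    bordered 0 (-fun j : Fin (ℓ + 1) => A (ℓ - j))
      (fun i => algebraMap F R ((Pi.single 0 1 : Fin (ℓ + 1) → F) i))
      ((lowerShift (ℓ + 1)).map (algebraMap F R)) := by
  refine bordered_conj_of_companion (revVandermonde_map_mul_map_inv hτ)
    (sum_pow_smul_eq_vecMul_revVandermonde ℓ τ A) ?_ ?_
  · ext i
    rw [← revVandermonde_mulVec_nodalWeight hτ, RingHom.map_mulVec]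
    rfl
  · have h := congrArg (·.map (algebraMap F R)) (revVandermonde_mul_diagonal ℓ τ)
    simp only [Matrix.map_mul] at h
    rw [h]
    congr 3
    ext i j
    simp [vecMulVec]

end Nodes

/-- Strict equivalence of the Lagrange-basis pencil
`z·C_{L,1} − C_{L,0}` of `P(z) = Σ_{m=0}^ℓ A_m z^m` on `ℓ+1` distinct nodes to the
monomial-basis second companion pencil `z·C_{M,1} − C_{M,0}` of `P` regarded as a
matrix polynomial of grade `ℓ+2`: with `U = diag(I_n, V ⊗ I_n)` and
`W = [[I_n, q],[0, V⁻¹ ⊗ I_n]]` (here `V` is the Vandermonde matrix of the nodes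
and `q` the row of coefficients of the node polynomial `w(z)`), one has
`U·C_{L,1}·W = C_{M,1}` and `U·C_{L,0}·W = C_{M,0}`; moreover
`det U = ±∏_{i<j}(τ_j − τ_i)^n ≠ 0`.  Blocks are encoded on
`Fin (ℓ+2) × Fin n`, block index first. -/
theorem lagrange_strictly_equivalent_monomial
    {F : Type*} [Field F] (n ℓ : ℕ)
    (τ : ℕ → F) (hτ : ∀ j ≤ ℓ, ∀ k ≤ ℓ, j ≠ k → τ j ≠ τ k)
    (β : ℕ → F)
    (hβ : ∀ k ≤ ℓ, β k = ∏ j ∈ (Finset.range (ℓ + 1)).erase k, (τ k - τ j)⁻¹)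
    (A : ℕ → Matrix (Fin n) (Fin n) F)
    (Pval : ℕ → Matrix (Fin n) (Fin n) F)
    (hPval : ∀ k, Pval k = ∑ m ∈ Finset.range (ℓ + 1), (τ k ^ m) • A m)
    (q : ℕ → F)
    (hq : ∏ k ∈ Finset.range (ℓ + 1), (X - C (τ k)) =
      X ^ (ℓ + 1) + ∑ k ∈ Finset.range (ℓ + 1), C (q k) * X ^ k)
    (V : Matrix (Fin (ℓ + 1)) (Fin (ℓ + 1)) F)
    (hV : ∀ i j : Fin (ℓ + 1), V i j = τ (ℓ - j.val) ^ (ℓ - i.val))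
    (CL1 CL0 CM1 CM0 U W : Matrix (Fin (ℓ + 2) × Fin n) (Fin (ℓ + 2) × Fin n) F)
    (hCL1 : ∀ r c : Fin (ℓ + 2), ∀ s t : Fin n, CL1 (r, s) (c, t) =
      if r = c then (if r.val = 0 then 0 else if s = t then 1 else 0) else 0)
    (hCL0 : ∀ r c : Fin (ℓ + 2), ∀ s t : Fin n, CL0 (r, s) (c, t) =
      if r.val = 0 then
        (if c.val = 0 then 0 else (-(Pval (ℓ - (c.val - 1)))) s t)
      else if c.val = 0 then (if s = t then β (ℓ - (r.val - 1)) else 0)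
      else if r = c then (if s = t then τ (ℓ - (r.val - 1)) else 0)
      else 0)
    (hCM1 : ∀ r c : Fin (ℓ + 2), ∀ s t : Fin n, CM1 (r, s) (c, t) =
      if r = c then (if r.val = 0 then 0 else if s = t then 1 else 0) else 0)
    (hCM0 : ∀ r c : Fin (ℓ + 2), ∀ s t : Fin n, CM0 (r, s) (c, t) =
      if r.val = 0 then
        (if c.val = 0 then 0 else (-(A (ℓ - (c.val - 1)))) s t)
      else if c.val + 1 = r.val then (if s = t then 1 else 0)
      else 0)
    (hU : ∀ r c : Fin (ℓ + 2), ∀ s t : Fin n, U (r, s) (c, t) =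
      if r.val = 0 then (if c.val = 0 then (if s = t then 1 else 0) else 0)
      else if c.val = 0 then 0
      else if s = t then
        V ⟨r.val - 1, by have := r.isLt; omega⟩ ⟨c.val - 1, by have := c.isLt; omega⟩
      else 0)
    (hW : ∀ r c : Fin (ℓ + 2), ∀ s t : Fin n, W (r, s) (c, t) =
      if r.val = 0 then
        (if c.val = 0 then (if s = t then 1 else 0)
         else if s = t then q (ℓ - (c.val - 1)) else 0)
      else if c.val = 0 then 0
      else if s = t then
        V⁻¹ ⟨r.val - 1, by have := r.isLt; omega⟩ ⟨c.val - 1, by have := c.isLt; omega⟩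
      else 0) :
    U * CL1 * W = CM1 ∧ U * CL0 * W = CM0 ∧
    (U.det = (∏ j ∈ Finset.range (ℓ + 1), ∏ i ∈ Finset.range j, (τ j - τ i)) ^ n ∨
     U.det = -((∏ j ∈ Finset.range (ℓ + 1), ∏ i ∈ Finset.range j, (τ j - τ i)) ^ n)) ∧
    (∏ j ∈ Finset.range (ℓ + 1), ∏ i ∈ Finset.range j, (τ j - τ i)) ^ n ≠ 0 := by
  have hinj : Set.InjOn τ (range (ℓ + 1)) := fun j hj k hk h => by
    by_contra hne
    exact hτ j (Nat.lt_succ_iff.1 (mem_range.1 hj)) k (Nat.lt_succ_iff.1 (mem_range.1 hk)) hne h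
  obtain rfl : V = revVandermonde ℓ τ := ext hV
  have hβ' (i : Fin (ℓ + 1)) : β (ℓ - i) = Lagrange.nodalWeight (range (ℓ + 1)) τ (ℓ - i) :=
    hβ _ (Nat.sub_le _ _)
  have hq' (j : Fin (ℓ + 1)) : q (ℓ - j) = (Lagrange.nodal (range (ℓ + 1)) τ).coeff (ℓ - j) := by
    rw [Lagrange.nodal, hq]
    simp [coeff_X_pow, finsetSum_coeff, show ℓ - (j : ℕ) ≠ ℓ + 1 by omega]
  have eU : U = compRingEquiv _ _ F (bordered 1 0 0
      ((revVandermonde ℓ τ).map (algebraMap F (Matrix (Fin n) (Fin n) F)))) := by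
    ext ⟨i, s⟩ ⟨j, t⟩
    cases i using Fin.cases <;> cases j using Fin.cases <;>
      simp [hU, algebraMap_matrix_apply, one_apply]
  have eW : W = compRingEquiv _ _ F (bordered 1
      (fun j => algebraMap F _ ((Lagrange.nodal (range (ℓ + 1)) τ).coeff (ℓ - j))) 0
      ((revVandermonde ℓ τ)⁻¹.map (algebraMap F (Matrix (Fin n) (Fin n) F)))) := by
    ext ⟨i, s⟩ ⟨j, t⟩
    cases i using Fin.cases <;> cases j using Fin.cases <;>
      simp [hW, hq', algebraMap_matrix_apply, one_apply]
  have hC1 : CM1 = CL1 := ext fun ⟨r, s⟩ ⟨c, t⟩ => (hCM1 r c s t).trans (hCL1 r c s t).symm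
  have eCL1 : CL1 = compRingEquiv _ _ F (bordered 0 0 0 1) := by
    ext ⟨i, s⟩ ⟨j, t⟩
    cases i using Fin.cases <;> cases j using Fin.cases <;>
      simp [hCL1, one_apply, Matrix.ite_apply, Fin.succ_ne_zero]
  have eCL0 : CL0 = compRingEquiv _ _ F (bordered 0
      (-fun j : Fin (ℓ + 1) => ∑ m ∈ range (ℓ + 1), τ (ℓ - j) ^ m • A m)
      (fun i => algebraMap F _ (Lagrange.nodalWeight (range (ℓ + 1)) τ (ℓ - i)))
      ((diagonal fun i : Fin (ℓ + 1) => τ (ℓ - i)).map (algebraMap F _))) := by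
    ext ⟨i, s⟩ ⟨j, t⟩
    cases i using Fin.cases <;> cases j using Fin.cases <;>
      simp [hCL0, hPval, hβ', algebraMap_matrix_apply, diagonal_apply, Matrix.ite_apply]
  have eCM0 : CM0 = compRingEquiv _ _ F (bordered 0 (-fun j : Fin (ℓ + 1) => A (ℓ - j))
      (fun i => algebraMap F _ ((Pi.single 0 1 : Fin (ℓ + 1) → F) i))
      ((lowerShift (ℓ + 1)).map (algebraMap F _))) := by
    ext ⟨i, s⟩ ⟨j, t⟩
    cases i using Fin.cases <;> cases j using Fin.cases <;>
      simp [hCM0, lowerShift, algebraMap_matrix_apply, Pi.single_apply, Matrix.ite_apply,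
        one_apply, ← ite_and, and_comm]
  refine ⟨?_, ?_, ?_, pow_ne_zero _ (prod_range_prod_range_sub_ne_zero hinj)⟩
  · rw [hC1, eU, eCL1, eW, ← map_mul, ← map_mul,
      bordered_conj_zero_one _ (revVandermonde_map_mul_map_inv hinj)]
  · rw [eU, eCL0, eW, eCM0, ← map_mul, ← map_mul, bordered_conj_lagrange_eq_monomial hinj A]
  · left
    have eUk : U = bordered 1 0 0 (revVandermonde ℓ τ) ⊗ₖ (1 : Matrix (Fin n) (Fin n) F) := by
      rw [eU, compRingEquiv_apply, ← comp_map_algebraMap, bordered_map]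
      simp
    rw [eUk, det_kronecker, det_bordered_zero_row, det_one, one_pow, one_mul, mul_one,
      det_revVandermonde, Fintype.card_fin]
end
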